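/- arXiv:2105.08641 — 6 statements merged into one kernel-verified Lean document; each statement's English description precedes it below -/
import Mathlib

section
/- (Theorem 3.1: the quasiresolvent inverts A_max − z) Assume the LC condition. For every z ∈ ℂ and every h ∈ L², the function u := 𝓡(z)h satisfies: u ∈ L²; u is continuously differentiable on [0,∞) with u′(x) = θ_z′(x)·∫₀ˣ φ_z(y)h(y)dy + φ_z′(x)·∫ₓ^∞ θ_z(y)h(y)dy; u′(0) = α·u(0); p·u′ is locally absolutely continuous on [0,∞); and −(p(x)u′(x))′ + q(x)u(x) − z·u(x) = h(x) for almost every x ∈ (0,∞). In particular u ∈ D(A_max) and (A_max − zI)𝓡(z)h = h. -/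
open MeasureTheory Set Filter

noncomputable section

namespace SLLC

/-- Lebesgue measure restricted to `(0,∞)`. -/
def mu : Measure ℝ := volume.restrict (Ioi 0)

/-- Inner product `⟨f,g⟩ = ∫₀^∞ f(x)·conj(g(x)) dx`, linear in the first argument. -/
def ip (f g : ℝ → ℂ) : ℂ := ∫ x in Ioi (0 : ℝ), f x * (starRingEnd ℂ) (g x)

/-- The classical differential expression `𝒜u = -(p u')' + q u = -(p' u' + p u'') + q u`,
written in terms of chosen first and second derivatives `u'`, `u''` of `u`. -/
def opA (p p' q : ℝ → ℝ) (u' u'' u : ℝ → ℂ) : ℝ → ℂ :=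
  fun x => -((p' x : ℂ) * u' x + (p x : ℂ) * u'' x) + (q x : ℂ) * u x

/-- The a.e.-defined differential expression `𝒜u = -(p u')' + q u`, written in terms of a
locally integrable function `g` representing `(p u')'`. -/
def aeA (q : ℝ → ℝ) (u g : ℝ → ℂ) : ℝ → ℂ := fun x => -g x + (q x : ℂ) * u x

/-- The standing hypotheses: `p` is continuously differentiable on `[0,∞)` (with derivative `p'`)
and positive, `q` is continuous on `[0,∞)`, and for every `z ∈ ℂ` the functions `φ z`, `θ z`
are C² solutions of `-(p u')' + q u = z u` on `[0,∞)` (with first derivatives `φ' z`, `θ' z`)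
with initial conditions `φ z 0 = 1`, `(φ z)' 0 = α`, `θ z 0 = 0`, `(θ z)' 0 = -1/p 0`.
The limit circle (LC) assumption is `φ z ∈ L²` and `θ z ∈ L²` for every `z`. -/
structure Setting (p p' q : ℝ → ℝ) (α : ℝ) (φ φD θ θD : ℂ → ℝ → ℂ) : Prop where
  p_pos : ∀ x ∈ Ici (0 : ℝ), 0 < p x
  p_deriv : ∀ x ∈ Ici (0 : ℝ), HasDerivWithinAt p (p' x) (Ici 0) x
  p'_cont : ContinuousOn p' (Ici 0)
  q_cont : ContinuousOn q (Ici 0)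
  φ_deriv : ∀ z : ℂ, ∀ x ∈ Ici (0 : ℝ), HasDerivWithinAt (φ z) (φD z x) (Ici 0) x
  φ_ode : ∀ z : ℂ, ∀ x ∈ Ici (0 : ℝ),
    HasDerivWithinAt (fun y => (p y : ℂ) * φD z y) (((q x : ℂ) - z) * φ z x) (Ici 0) x
  θ_deriv : ∀ z : ℂ, ∀ x ∈ Ici (0 : ℝ), HasDerivWithinAt (θ z) (θD z x) (Ici 0) x
  θ_ode : ∀ z : ℂ, ∀ x ∈ Ici (0 : ℝ),
    HasDerivWithinAt (fun y => (p y : ℂ) * θD z y) (((q x : ℂ) - z) * θ z x) (Ici 0) x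
  φ_init : ∀ z : ℂ, φ z 0 = 1
  φ_init' : ∀ z : ℂ, φD z 0 = (α : ℂ)
  θ_init : ∀ z : ℂ, θ z 0 = 0
  θ_init' : ∀ z : ℂ, θD z 0 = -((p 0 : ℂ))⁻¹
  lc_φ : ∀ z : ℂ, MemLp (φ z) 2 mu
  lc_θ : ∀ z : ℂ, MemLp (θ z) 2 mu

/-- A smooth cut-off `ω` vanishing near `0` and equal to `1` near `∞`. -/
def Cutoff (ω : ℝ → ℝ) : Prop :=
  ContDiff ℝ (⊤ : ℕ∞) ω ∧ (∃ ε > (0 : ℝ), ∀ x < ε, ω x = 0) ∧ (∃ R : ℝ, ∀ x ≥ R, ω x = 1)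

/-- `u ∈ D(A_00)`: `u` is C² on `[0,∞)` (with derivatives `u'`, `u''`), vanishes for large `x`
and satisfies the boundary condition `u'(0) = α·u(0)`. -/
def InA00 (α : ℝ) (u u' u'' : ℝ → ℂ) : Prop :=
  (∀ x ∈ Ici (0 : ℝ), HasDerivWithinAt u (u' x) (Ici 0) x) ∧
  (∀ x ∈ Ici (0 : ℝ), HasDerivWithinAt u' (u'' x) (Ici 0) x) ∧
  ContinuousOn u'' (Ici 0) ∧
  (∃ R : ℝ, ∀ x ≥ R, u x = 0) ∧
  u' 0 = (α : ℂ) * u 0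

/-- `u ∈ D(A_min)`: `u ∈ L²` and there are `u_k ∈ D(A_00)` and `w ∈ L²` with `u_k → u` and
`𝒜u_k → w` in `L²`. -/
def InMinDom (p p' q : ℝ → ℝ) (α : ℝ) (u : ℝ → ℂ) : Prop :=
  MemLp u 2 mu ∧
  ∃ (U U' U'' : ℕ → ℝ → ℂ) (w : ℝ → ℂ), MemLp w 2 mu ∧
    (∀ k, InA00 α (U k) (U' k) (U'' k)) ∧
    Tendsto (fun k => eLpNorm (fun x => U k x - u x) 2 mu) atTop (nhds 0) ∧
    Tendsto (fun k => eLpNorm (fun x => opA p p' q (U' k) (U'' k) (U k) x - w x) 2 mu)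
      atTop (nhds 0)

/-- `u ∈ D(A_max)`, with explicit witnesses: `u ∈ L²`, `u` is continuously differentiable on
`[0,∞)` with derivative `u'`, the boundary condition `u'(0) = α·u(0)` holds, `p·u'` is locally
absolutely continuous on `[0,∞)` with a.e. derivative `g` (i.e. `(p u')(x) = (p u')(0) + ∫₀ˣ g`
with `g` locally integrable), and the a.e.-defined function `𝒜u = -g + q·u` belongs to `L²`. -/
def InMaxDomW (p q : ℝ → ℝ) (α : ℝ) (u u' g : ℝ → ℂ) : Prop :=
  MemLp u 2 mu ∧
  (∀ x ∈ Ici (0 : ℝ), HasDerivWithinAt u (u' x) (Ici 0) x) ∧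
  ContinuousOn u' (Ici 0) ∧
  u' 0 = (α : ℂ) * u 0 ∧
  (∀ r : ℝ, IntegrableOn g (Icc 0 r)) ∧
  (∀ x ∈ Ici (0 : ℝ), (p x : ℂ) * u' x = (p 0 : ℂ) * u' 0 + ∫ y in (0 : ℝ)..x, g y) ∧
  MemLp (aeA q u g) 2 mu

/-- `u ∈ D(A_max)`. -/
def InMaxDom (p q : ℝ → ℝ) (α : ℝ) (u : ℝ → ℂ) : Prop :=
  ∃ u' g, InMaxDomW p q α u u' g

/-- The generating function of the self-adjoint extension `A_t`: `t·φ₀ + θ̃₀` for `t ∈ ℝ`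
(`t = some t`), and `φ₀` for `t = ∞` (`t = none`). -/
def genFun (φ θ : ℂ → ℝ → ℂ) (ω : ℝ → ℝ) : Option ℝ → ℝ → ℂ
  | some t => fun x => (t : ℂ) * φ 0 x + (ω x : ℂ) * θ 0 x
  | none => fun x => φ 0 x

/-- `u ∈ D(A_t)` (as an element of `L²`, i.e., up to a.e. equality):
`u = u₀ + c·(t·φ₀ + θ̃₀)` for `t ∈ ℝ`, resp. `u = u₀ + c·φ₀` for `t = ∞`,
with `u₀ ∈ D(A_min)` and `c ∈ ℂ`. -/
def InDom (p p' q : ℝ → ℝ) (α : ℝ) (φ θ : ℂ → ℝ → ℂ) (ω : ℝ → ℝ) (t : Option ℝ)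
    (u : ℝ → ℂ) : Prop :=
  ∃ (u₀ : ℝ → ℂ) (c : ℂ), InMinDom p p' q α u₀ ∧
    ∀ᵐ x ∂mu, u x = u₀ x + c * genFun φ θ ω t x

/-- The quasiresolvent `(𝓡(z)h)(x) = θ_z(x)·∫₀ˣ φ_z h + φ_z(x)·∫ₓ^∞ θ_z h`. -/
def quasiRes (φ θ : ℂ → ℝ → ℂ) (z : ℂ) (h : ℝ → ℂ) : ℝ → ℂ :=
  fun x => θ z x * (∫ y in (0 : ℝ)..x, φ z y * h y) + φ z x * (∫ y in Ioi x, θ z y * h y)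


set_option linter.unusedSectionVars false
variable {E : Type*} [NormedAddCommGroup E] [NormedSpace ℝ E]

lemma icc_int {f : ℝ → E} (hf : ∀ r : ℝ, IntegrableOn f (Ioc 0 r)) (r : ℝ) :
    IntegrableOn f (Icc 0 r) :=
  (hf r).congr_set_ae Ioc_ae_eq_Icc.symm

lemma ii_of_icc {f : ℝ → E} (hf : ∀ r : ℝ, IntegrableOn f (Icc 0 r))
    {a b : ℝ} (ha : 0 ≤ a) (hb : 0 ≤ b) : IntervalIntegrable f volume a b :=
  ((hf (max a b)).mono_set
    (by rw [uIcc]; exact Icc_subset_Icc (le_min ha hb) le_rfl)).intervalIntegrable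

lemma cwa_prim {f : ℝ → E} (hf : ∀ r : ℝ, IntegrableOn f (Icc 0 r))
    {a x : ℝ} (ha : 0 ≤ a) (hx : 0 ≤ x) :
    ContinuousWithinAt (fun s => ∫ y in a..s, f y) (Ici 0) x := by
  have h1 : ContinuousWithinAt (fun s => ∫ y in a..s, f y) (Icc 0 (x + 1)) x := by
    apply intervalIntegral.continuousWithinAt_primitive (measure_singleton x)
    exact ii_of_icc hf (le_min ha le_rfl) (le_max_of_le_right (by linarith))
  have hset : Ici (0:ℝ) =ᶠ[nhds x] Icc (0:ℝ) (x + 1) := by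
    filter_upwards [Iio_mem_nhds (show x < x + 1 by linarith)] with s hs
    simp only [mem_Ici, mem_Icc, eq_iff_iff]
    exact ⟨fun h => ⟨h, le_of_lt hs⟩, fun h => h.1⟩
  unfold ContinuousWithinAt
  rw [nhdsWithin_eq_iff_eventuallyEq.mpr hset]
  exact h1

lemma const_on_Ici' {f : ℝ → E} (hc : ContinuousOn f (Ici 0))
    (hf : ∀ x ∈ Ici (0:ℝ), HasDerivWithinAt f 0 (Ici x) x) :
    ∀ x ∈ Ici (0:ℝ), f x = f 0 := fun x hx =>
  constant_of_has_deriv_right_zero (hc.mono Icc_subset_Ici_self)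
    (fun y hy => hf y hy.1) x ⟨hx, le_refl x⟩


lemma abs_sub_le_of_mem_uIcc {x s y : ℝ} (hy : y ∈ uIcc x s) : |y - x| ≤ |s - x| := by
  rw [uIcc] at hy
  rcases le_total x s with hle | hle
  · rw [min_eq_left hle, max_eq_right hle] at hy
    rw [abs_of_nonneg (by linarith [hy.1]), abs_of_nonneg (by linarith)]
    linarith [hy.2]
  · rw [min_eq_right hle, max_eq_left hle] at hy
    rw [abs_of_nonpos (by linarith [hy.2]), abs_of_nonpos (by linarith)]
    linarith [hy.1]

lemma abs_intervalIntegral_mono {g1 g2 : ℝ → ℝ} {x s : ℝ}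
    (h1 : IntervalIntegrable g1 volume x s) (h2 : IntervalIntegrable g2 volume x s)
    (h0 : ∀ y ∈ uIoc x s, 0 ≤ g1 y) (hle : ∀ y ∈ uIoc x s, g1 y ≤ g2 y) :
    |∫ y in x..s, g1 y| ≤ |∫ y in x..s, g2 y| := by
  rcases le_total x s with hxs | hxs
  · rw [uIoc_of_le hxs] at h0 hle
    rw [intervalIntegral.integral_of_le hxs, intervalIntegral.integral_of_le hxs]
    have m1 : 0 ≤ ∫ y in Ioc x s, g1 y := setIntegral_nonneg measurableSet_Ioc h0
    have m2 : (∫ y in Ioc x s, g1 y) ≤ ∫ y in Ioc x s, g2 y :=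
      setIntegral_mono_on h1.1 h2.1 measurableSet_Ioc hle
    rw [abs_of_nonneg m1, abs_of_nonneg (m1.trans m2)]
    exact m2
  · rw [uIoc_of_ge hxs] at h0 hle
    rw [intervalIntegral.integral_of_ge hxs, intervalIntegral.integral_of_ge hxs]
    have m1 : 0 ≤ ∫ y in Ioc s x, g1 y := setIntegral_nonneg measurableSet_Ioc h0
    have m2 : (∫ y in Ioc s x, g1 y) ≤ ∫ y in Ioc s x, g2 y :=
      setIntegral_mono_on h1.2 h2.2 measurableSet_Ioc hle
    rw [abs_neg, abs_neg, abs_of_nonneg m1, abs_of_nonneg (m1.trans m2)]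
    exact m2


lemma keyA {a aD f : ℝ → ℂ} {C : ℂ} {x : ℝ} (hx : x ∈ Ici (0:ℝ))
    (ha : HasDerivWithinAt a (aD x) (Ici 0) x)
    (hf : ∀ r : ℝ, IntegrableOn f (Icc 0 r))
    (haf : ∀ r : ℝ, IntegrableOn (fun y => a y * f y) (Icc 0 r)) :
    HasDerivWithinAt
      (fun s => a s * (C + ∫ y in (0:ℝ)..s, f y) - ∫ y in (0:ℝ)..s, a y * f y)
      (aD x * (C + ∫ y in (0:ℝ)..x, f y)) (Ici 0) x := by
  have hx0 : (0:ℝ) ≤ x := hx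
  set E : ℝ → ℂ := fun s => ∫ y in x..s, (a s - a y) * f y with hE
  -- decomposition
  have key : ∀ s ∈ Ici (0:ℝ),
      a s * (C + ∫ y in (0:ℝ)..s, f y) - ∫ y in (0:ℝ)..s, a y * f y
      = ((a s - a x) * (C + ∫ y in (0:ℝ)..x, f y) + E s)
        + (a x * (C + ∫ y in (0:ℝ)..x, f y) - ∫ y in (0:ℝ)..x, a y * f y) := by
    intro s hs
    have hs0 : (0:ℝ) ≤ s := hs
    have h1 : (∫ y in (0:ℝ)..s, f y) - ∫ y in (0:ℝ)..x, f y = ∫ y in x..s, f y :=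
      intervalIntegral.integral_interval_sub_left (ii_of_icc hf le_rfl hs0)
        (ii_of_icc hf le_rfl hx0)
    have h2 : (∫ y in (0:ℝ)..s, a y * f y) - ∫ y in (0:ℝ)..x, a y * f y
        = ∫ y in x..s, a y * f y :=
      intervalIntegral.integral_interval_sub_left (ii_of_icc haf le_rfl hs0)
        (ii_of_icc haf le_rfl hx0)
    have h3 : E s = a s * (∫ y in x..s, f y) - ∫ y in x..s, a y * f y := by
      rw [hE]
      simp only
      rw [← intervalIntegral.integral_const_mul, ← intervalIntegral.integral_sub
        ((ii_of_icc hf hx0 hs0).const_mul (a s)) (ii_of_icc haf hx0 hs0)]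
      congr 1
      ext y
      ring
    linear_combination (-1 : ℂ) * h3 + a s * h1 - h2
  -- E is o(s - x)
  have hEderiv : HasDerivWithinAt E 0 (Ici 0) x := by
    rw [hasDerivWithinAt_iff_isLittleO]
    have hEx : E x = 0 := by simp [hE]
    simp only [hEx, smul_zero, sub_zero]
    rw [Asymptotics.isLittleO_iff]
    intro c hc
    obtain ⟨K, hK, hKb⟩ := ha.hasFDerivWithinAt.isBigO_sub.exists_pos
    have hKb' := hKb.bound
    obtain ⟨δ, hδ, hδb'⟩ := Metric.mem_nhdsWithin_iff.1 hKb'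
    have hδb : ∀ s, s ∈ Ici (0:ℝ) → dist s x < δ → ‖a s - a x‖ ≤ K * ‖s - x‖ :=
      fun s hsI hsd => hδb' ⟨Metric.mem_ball.mpr hsd, hsI⟩
    -- continuity of the primitive of ‖f‖ at x
    have hΦ : ContinuousWithinAt (fun s => ∫ y in x..s, ‖f y‖) (Ici 0) x :=
      cwa_prim (fun r => (hf r).norm) hx0 hx0
    have hΦx : (∫ y in x..x, ‖f y‖) = 0 := intervalIntegral.integral_same
    have hΦ0 : Tendsto (fun s => ∫ y in x..s, ‖f y‖) (nhdsWithin x (Ici 0)) (nhds 0) := by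
      simpa only [intervalIntegral.integral_same] using hΦ.tendsto
    have hev1 : ∀ᶠ s in nhdsWithin x (Ici 0), |∫ y in x..s, ‖f y‖| < c / (2 * K) := by
      have := hΦ0.eventually (eventually_abs_sub_lt 0 (by positivity : (0:ℝ) < c / (2 * K)))
      simpa using this
    have hev2 : ∀ᶠ s in nhdsWithin x (Ici 0), dist s x < δ :=
      eventually_nhdsWithin_of_eventually_nhds (Metric.ball_mem_nhds x hδ)
    filter_upwards [hev1, hev2, self_mem_nhdsWithin] with s hs1 hs2 hs0
    have hs0' : (0:ℝ) ≤ s := hs0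
    -- pointwise bound on the integrand
    have hbd : ∀ y ∈ uIoc x s, ‖(a s - a y) * f y‖ ≤ 2 * K * |s - x| * ‖f y‖ := by
      intro y hy
      have hy' : y ∈ uIcc x s := uIoc_subset_uIcc hy
      have hyI : y ∈ Ici (0:ℝ) := by
        have : min x s ≤ y := ((Set.mem_Icc).1 (by rwa [uIcc] at hy')).1
        have : (0:ℝ) ≤ min x s := le_min hx0 hs0'
        exact le_trans this (((Set.mem_Icc).1 (by rwa [uIcc] at hy')).1)
      have hyd : |y - x| ≤ |s - x| := abs_sub_le_of_mem_uIcc hy'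
      have hys : dist y x < δ := lt_of_le_of_lt (by rw [Real.dist_eq, Real.dist_eq]; exact hyd) hs2
      have b1 : ‖a s - a x‖ ≤ K * |s - x| := by
        have := hδb s hs0 hs2
        simpa [Real.norm_eq_abs] using this
      have b2 : ‖a y - a x‖ ≤ K * |s - x| := by
        have := hδb y hyI hys
        have h2 : ‖a y - a x‖ ≤ K * |y - x| := by simpa [Real.norm_eq_abs] using this
        exact h2.trans (by nlinarith)
      have : ‖a s - a y‖ ≤ 2 * K * |s - x| := by
        have := norm_sub_le_norm_sub_add_norm_sub (a s) (a x) (a y)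
        calc ‖a s - a y‖ ≤ ‖a s - a x‖ + ‖a x - a y‖ := norm_sub_le_norm_sub_add_norm_sub _ _ _
          _ = ‖a s - a x‖ + ‖a y - a x‖ := by rw [norm_sub_rev (a x)]
          _ ≤ 2 * K * |s - x| := by linarith
      calc ‖(a s - a y) * f y‖ = ‖a s - a y‖ * ‖f y‖ := norm_mul _ _
        _ ≤ 2 * K * |s - x| * ‖f y‖ := by
            exact mul_le_mul_of_nonneg_right this (norm_nonneg _)
    have int1 : IntervalIntegrable (fun y => ‖(a s - a y) * f y‖) volume x s := by
      have : IntervalIntegrable (fun y => (a s - a y) * f y) volume x s :=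
        ((ii_of_icc hf hx0 hs0').const_mul (a s)).sub
          (by simpa using (ii_of_icc haf hx0 hs0')) |>.congr ?_
      · exact this.norm
      · exact fun y _ => by ring
    have int2 : IntervalIntegrable (fun y => 2 * K * |s - x| * ‖f y‖) volume x s :=
      ((ii_of_icc hf hx0 hs0').norm).const_mul _
    calc ‖E s‖ ≤ |∫ y in x..s, ‖(a s - a y) * f y‖| :=
          intervalIntegral.norm_integral_le_abs_integral_norm
      _ ≤ |∫ y in x..s, 2 * K * |s - x| * ‖f y‖| :=
          abs_intervalIntegral_mono int1 int2 (fun y _ => norm_nonneg _) hbd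
      _ = 2 * K * |s - x| * |∫ y in x..s, ‖f y‖| := by
          rw [intervalIntegral.integral_const_mul, abs_mul]
          congr 1
          rw [abs_of_nonneg (by positivity)]
      _ ≤ 2 * K * |s - x| * (c / (2 * K)) := by
          apply mul_le_mul_of_nonneg_left hs1.le (by positivity)
      _ = c * ‖s - x‖ := by
          rw [Real.norm_eq_abs]; field_simp
  -- assemble
  have hd1 : HasDerivWithinAt
      (fun s => (a s - a x) * (C + ∫ y in (0:ℝ)..x, f y))
      (aD x * (C + ∫ y in (0:ℝ)..x, f y)) (Ici 0) x :=
    (ha.sub_const (a x)).mul_const _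
  have hsum := ((hd1.add hEderiv).add_const
    (a x * (C + ∫ y in (0:ℝ)..x, f y) - ∫ y in (0:ℝ)..x, a y * f y))
  rw [add_zero] at hsum
  exact hsum.congr key (key x hx)

/-- Theorem 3.1: the quasiresolvent inverts `A_max − z`. Assume the LC
condition. For `z ∈ ℂ` and `h ∈ L²`, the function `u := 𝓡(z)h` belongs to `L²`, is continuously
differentiable on `[0,∞)` with the stated derivative `u'`, satisfies `u'(0) = α·u(0)`, `p·u'`
is locally absolutely continuous, and `−(p u')' + q u − z u = h` a.e.; in particular
`u ∈ D(A_max)` and `(A_max − zI)𝓡(z)h = h`. -/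
theorem stmt_6 (p p' q : ℝ → ℝ) (α : ℝ) (φ φD θ θD : ℂ → ℝ → ℂ)
    (hS : Setting p p' q α φ φD θ θD)
    (z : ℂ) (h : ℝ → ℂ) (hh : MemLp h 2 mu) :
    ∃ u' g : ℝ → ℂ,
      (∀ x : ℝ, u' x = θD z x * (∫ y in (0 : ℝ)..x, φ z y * h y)
        + φD z x * (∫ y in Ioi x, θ z y * h y)) ∧
      InMaxDomW p q α (quasiRes φ θ z h) u' g ∧
      ∀ᵐ x ∂mu, -g x + (q x : ℂ) * quasiRes φ θ z h x - z * quasiRes φ θ z h x = h x := by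
  -- basic continuity facts
  have hp0 : ∀ x ∈ Ici (0:ℝ), ((p x : ℂ)) ≠ 0 := fun x hx =>
    Complex.ofReal_ne_zero.mpr (hS.p_pos x hx).ne'
  have hpc : ContinuousOn p (Ici 0) := fun x hx => (hS.p_deriv x hx).continuousWithinAt
  have hφc : ContinuousOn (φ z) (Ici 0) := fun x hx => (hS.φ_deriv z x hx).continuousWithinAt
  have hθc : ContinuousOn (θ z) (Ici 0) := fun x hx => (hS.θ_deriv z x hx).continuousWithinAt
  have hPφc : ContinuousOn (fun y => (p y : ℂ) * φD z y) (Ici 0) :=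
    fun x hx => (hS.φ_ode z x hx).continuousWithinAt
  have hPθc : ContinuousOn (fun y => (p y : ℂ) * θD z y) (Ici 0) :=
    fun x hx => (hS.θ_ode z x hx).continuousWithinAt
  have hpC : ContinuousOn (fun y => (p y : ℂ)) (Ici 0) :=
    Complex.continuous_ofReal.comp_continuousOn hpc
  have hφDc : ContinuousOn (φD z) (Ici 0) := by
    refine ((hpC.inv₀ hp0).mul hPφc).congr fun y hy => ?_
    show φD z y = (p y : ℂ)⁻¹ * ((p y : ℂ) * φD z y)
    rw [inv_mul_cancel_left₀ (hp0 y hy)]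
  have hθDc : ContinuousOn (θD z) (Ici 0) := by
    refine ((hpC.inv₀ hp0).mul hPθc).congr fun y hy => ?_
    show θD z y = (p y : ℂ)⁻¹ * ((p y : ℂ) * θD z y)
    rw [inv_mul_cancel_left₀ (hp0 y hy)]
  -- integrability facts
  have hmul : ∀ (f : ℝ → ℂ), MemLp f 2 mu → Integrable (fun y => f y * h y) mu := by
    intro f hf
    have h1 : MemLp (f • h) 1 mu :=
      hh.smul hf
    exact memLp_one_iff_integrable.mp h1
  have hφh : Integrable (fun y => φ z y * h y) mu := hmul _ (hS.lc_φ z)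
  have hθh : Integrable (fun y => θ z y * h y) mu := hmul _ (hS.lc_θ z)
  have hloc : ∀ (f : ℝ → ℂ), Integrable f mu → ∀ r : ℝ, IntegrableOn f (Icc 0 r) := by
    intro f hf
    apply icc_int
    intro r
    have h1 : IntegrableOn f (Ioi 0) volume := hf
    exact h1.mono_set Ioc_subset_Ioi_self
  have hφh_loc := hloc _ hφh
  have hθh_loc := hloc _ hθh
  have hθh_loc' : ∀ r : ℝ, IntegrableOn (fun y => -(θ z y * h y)) (Icc 0 r) := fun r =>
    (hθh_loc r).neg
  have hmull : ∀ (a f : ℝ → ℂ), ContinuousOn a (Ici 0) → (∀ r : ℝ, IntegrableOn f (Icc 0 r)) →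
      ∀ r : ℝ, IntegrableOn (fun y => a y * f y) (Icc 0 r) := fun a f hac hf r =>
    (hf r).continuousOn_mul (hac.mono Icc_subset_Ici_self) isCompact_Icc
  -- the two primitives
  set F : ℝ → ℂ := fun s => ∫ y in (0:ℝ)..s, φ z y * h y with hF
  set Gf : ℝ → ℂ := fun s => ∫ y in Ioi s, θ z y * h y with hGdef
  set Cθ : ℂ := ∫ y in Ioi (0:ℝ), θ z y * h y with hCθ
  have hGsplit : ∀ x ∈ Ici (0:ℝ), Gf x = Cθ + ∫ y in (0:ℝ)..x, -(θ z y * h y) := by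
    intro x hx
    have hint : IntegrableOn (fun y => θ z y * h y) (Ioi 0) volume := hθh
    have hu : Ioc 0 x ∪ Ioi x = Ioi (0:ℝ) := Ioc_union_Ioi_eq_Ioi hx
    have hd : Disjoint (Ioc 0 x) (Ioi x) := by
      apply Set.disjoint_left.mpr
      intro y hy1 hy2
      exact absurd hy1.2 (not_le.mpr hy2)
    have hsplit := setIntegral_union hd measurableSet_Ioi
      (hint.mono_set (hu ▸ subset_union_left)) (hint.mono_set (hu ▸ subset_union_right))
    rw [hu] at hsplit
    rw [intervalIntegral.integral_neg, intervalIntegral.integral_of_le hx]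
    rw [hGdef, hCθ]
    simp only
    rw [hsplit]
    ring
  -- the derivative of the quasiresolvent
  have hu' : ∀ x ∈ Ici (0:ℝ), HasDerivWithinAt (quasiRes φ θ z h)
      (θD z x * F x + φD z x * Gf x) (Ici 0) x := by
    intro x hx
    have k1 := keyA (C := (0:ℂ)) hx (hS.θ_deriv z x hx) hφh_loc (hmull _ _ hθc hφh_loc)
    have k2 := keyA (C := Cθ) hx (hS.φ_deriv z x hx) hθh_loc'
      (hmull _ _ hφc hθh_loc')
    have hsum := k1.add k2
    have heq : ∀ s ∈ Ici (0:ℝ), quasiRes φ θ z h s =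
        (θ z s * ((0:ℂ) + ∫ y in (0:ℝ)..s, φ z y * h y)
          - ∫ y in (0:ℝ)..s, θ z y * (φ z y * h y))
        + (φ z s * (Cθ + ∫ y in (0:ℝ)..s, -(θ z y * h y))
          - ∫ y in (0:ℝ)..s, φ z y * -(θ z y * h y)) := by
      intro s hs
      have e1 : (∫ y in (0:ℝ)..s, θ z y * (φ z y * h y))
          = -∫ y in (0:ℝ)..s, φ z y * -(θ z y * h y) := by
        rw [← intervalIntegral.integral_neg]
        apply intervalIntegral.integral_congr
        intro y _
        ring
      have e2 : quasiRes φ θ z h s = θ z s * F s + φ z s * Gf s := rfl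
      rw [e2, hGsplit s hs]
      linear_combination e1
    have heqd : θD z x * F x + φD z x * Gf x
        = θD z x * ((0:ℂ) + F x) + φD z x * (Cθ + ∫ y in (0:ℝ)..x, -(θ z y * h y)) := by
      rw [zero_add, ← hGsplit x hx]
    rw [heqd]
    exact hsum.congr heq (heq x hx)
  have huc : ContinuousOn (quasiRes φ θ z h) (Ici 0) :=
    fun x hx => (hu' x hx).continuousWithinAt
  -- the candidate u' and g
  set u'f : ℝ → ℂ := fun x => θD z x * F x + φD z x * Gf x with hu'f
  set g : ℝ → ℂ := fun x => ((q x : ℂ) - z) * quasiRes φ θ z h x - h x with hg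
  -- continuity of u'
  have hFc : ContinuousOn F (Ici 0) := fun x hx => cwa_prim hφh_loc le_rfl hx
  have hGc : ContinuousOn Gf (Ici 0) := by
    have h1 : ContinuousOn (fun s => Cθ + ∫ y in (0:ℝ)..s, -(θ z y * h y)) (Ici 0) :=
      fun x hx => continuousWithinAt_const.add (cwa_prim hθh_loc' le_rfl hx)
    exact h1.congr hGsplit
  have hu'c : ContinuousOn u'f (Ici 0) := (hθDc.mul hFc).add (hφDc.mul hGc)
  -- membership of u in L²
  have hMemu : MemLp (quasiRes φ θ z h) 2 mu := by
    set M1 : ℝ := ∫ y in Ioi (0:ℝ), ‖φ z y * h y‖ with hM1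
    set M2 : ℝ := ∫ y in Ioi (0:ℝ), ‖θ z y * h y‖ with hM2
    have hM1nn : 0 ≤ M1 := setIntegral_nonneg measurableSet_Ioi fun y _ => norm_nonneg _
    have hM2nn : 0 ≤ M2 := setIntegral_nonneg measurableSet_Ioi fun y _ => norm_nonneg _
    have hFb : ∀ x ∈ Ici (0:ℝ), ‖F x‖ ≤ M1 := by
      intro x hx
      calc ‖F x‖ ≤ |∫ y in (0:ℝ)..x, ‖φ z y * h y‖| :=
            intervalIntegral.norm_integral_le_abs_integral_norm
        _ = ∫ y in Ioc 0 x, ‖φ z y * h y‖ := by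
            rw [intervalIntegral.integral_of_le hx, abs_of_nonneg
              (setIntegral_nonneg measurableSet_Ioc fun y _ => norm_nonneg _)]
        _ ≤ M1 := setIntegral_mono_set hφh.norm
            (Eventually.of_forall fun y => norm_nonneg _)
            (HasSubset.Subset.eventuallyLE Ioc_subset_Ioi_self)
    have hGb : ∀ x ∈ Ici (0:ℝ), ‖Gf x‖ ≤ M2 := by
      intro x hx
      calc ‖Gf x‖ ≤ ∫ y in Ioi x, ‖θ z y * h y‖ := norm_integral_le_integral_norm _
        _ ≤ M2 := setIntegral_mono_set hθh.norm
            (Eventually.of_forall fun y => norm_nonneg _)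
            (HasSubset.Subset.eventuallyLE (Ioi_subset_Ioi hx))
    have t1 : MemLp (fun x => θ z x * F x) 2 mu := by
      apply MemLp.of_le ((hS.lc_θ z).const_mul (M1:ℂ))
      · exact ((hθc.mono Ioi_subset_Ici_self).mul
          (hFc.mono Ioi_subset_Ici_self)).aestronglyMeasurable measurableSet_Ioi
      · have hmem : ∀ᵐ x ∂mu, x ∈ Ioi (0:ℝ) := ae_restrict_mem measurableSet_Ioi
        filter_upwards [hmem] with x hx
        have hx' : x ∈ Ici (0:ℝ) := mem_Ici.mpr (le_of_lt hx)
        calc ‖θ z x * F x‖ = ‖θ z x‖ * ‖F x‖ := norm_mul _ _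
          _ ≤ ‖θ z x‖ * M1 := mul_le_mul_of_nonneg_left (hFb x hx') (norm_nonneg _)
          _ = ‖(M1:ℂ) * θ z x‖ := by
              rw [norm_mul, Complex.norm_real, Real.norm_eq_abs, abs_of_nonneg hM1nn, mul_comm]
    have t2 : MemLp (fun x => φ z x * Gf x) 2 mu := by
      apply MemLp.of_le ((hS.lc_φ z).const_mul (M2:ℂ))
      · exact ((hφc.mono Ioi_subset_Ici_self).mul
          (hGc.mono Ioi_subset_Ici_self)).aestronglyMeasurable measurableSet_Ioi
      · have hmem : ∀ᵐ x ∂mu, x ∈ Ioi (0:ℝ) := ae_restrict_mem measurableSet_Ioi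
        filter_upwards [hmem] with x hx
        have hx' : x ∈ Ici (0:ℝ) := mem_Ici.mpr (le_of_lt hx)
        calc ‖φ z x * Gf x‖ = ‖φ z x‖ * ‖Gf x‖ := norm_mul _ _
          _ ≤ ‖φ z x‖ * M2 := mul_le_mul_of_nonneg_left (hGb x hx') (norm_nonneg _)
          _ = ‖(M2:ℂ) * φ z x‖ := by
              rw [norm_mul, Complex.norm_real, Real.norm_eq_abs, abs_of_nonneg hM2nn, mul_comm]
    exact t1.add t2
  -- the Wronskian identity
  have hwr : ∀ y ∈ Ici (0:ℝ),
      (p y : ℂ) * φD z y * θ z y - (p y : ℂ) * θD z y * φ z y = 1 := by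
    set w : ℝ → ℂ := fun y => (p y : ℂ) * φD z y * θ z y - (p y : ℂ) * θD z y * φ z y with hw
    have hder : ∀ y ∈ Ici (0:ℝ), HasDerivWithinAt w 0 (Ici 0) y := by
      intro y hy
      have d1 := (hS.φ_ode z y hy).mul (hS.θ_deriv z y hy)
      have d2 := (hS.θ_ode z y hy).mul (hS.φ_deriv z y hy)
      have d3 := d1.sub d2
      convert d3 using 1
      · rfl
      · rfl
      · ring
    have hcw : ContinuousOn w (Ici 0) := fun y hy => (hder y hy).continuousWithinAt
    intro y hy
    have hcst := const_on_Ici' hcw (fun t ht => (hder t ht).mono (Ici_subset_Ici.mpr ht)) y hy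
    have hwy : w y = (p y : ℂ) * φD z y * θ z y - (p y : ℂ) * θD z y * φ z y := rfl
    rw [← hwy, hcst]
    show (p 0 : ℂ) * φD z 0 * θ z 0 - (p 0 : ℂ) * θD z 0 * φ z 0 = 1
    rw [hS.φ_init, hS.φ_init', hS.θ_init, hS.θ_init']
    have hp0' : (p 0 : ℂ) ≠ 0 := hp0 0 self_mem_Ici
    field_simp
    ring
  -- local integrability of g
  have hqu_c : ContinuousOn (fun y => ((q y : ℂ) - z) * quasiRes φ θ z h y) (Ici 0) :=
    ((Complex.continuous_ofReal.comp_continuousOn hS.q_cont).sub continuousOn_const).mul huc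
  have hqu_loc : ∀ r : ℝ, IntegrableOn (fun y => ((q y : ℂ) - z) * quasiRes φ θ z h y)
      (Icc 0 r) := fun r =>
    (hqu_c.mono Icc_subset_Ici_self).integrableOn_compact isCompact_Icc
  have hh_loc : ∀ r : ℝ, IntegrableOn h (Icc 0 r) := by
    apply icc_int
    intro r
    have hrr : mu.restrict (Ioc 0 r) = volume.restrict (Ioc 0 r) := by
      unfold mu
      rw [Measure.restrict_restrict measurableSet_Ioc, inter_eq_left.mpr Ioc_subset_Ioi_self]
    have h2 : MemLp h 2 (volume.restrict (Ioc 0 r)) := by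
      rw [← hrr]; exact hh.restrict _
    haveI : Fact (volume (Ioc (0:ℝ) r) < ⊤) := ⟨measure_Ioc_lt_top⟩
    exact h2.integrable one_le_two
  have hg_loc : ∀ r : ℝ, IntegrableOn g (Icc 0 r) := by
    intro r
    rw [hg]
    exact (hqu_loc r).sub (hh_loc r)
  -- the FTC identity for p * u'
  have hW : ∀ x ∈ Ici (0:ℝ),
      (p x : ℂ) * u'f x = (p 0 : ℂ) * u'f 0 + ∫ y in (0:ℝ)..x, g y := by
    set Pθ : ℝ → ℂ := fun y => (p y : ℂ) * θD z y with hPθ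
    set Pφ : ℝ → ℂ := fun y => (p y : ℂ) * φD z y with hPφ
    set W : ℝ → ℂ := fun s =>
      (Pθ s * ((0:ℂ) + ∫ y in (0:ℝ)..s, φ z y * h y)
        - ∫ y in (0:ℝ)..s, Pθ y * (φ z y * h y))
      + (Pφ s * (Cθ + ∫ y in (0:ℝ)..s, -(θ z y * h y))
        - ∫ y in (0:ℝ)..s, Pφ y * -(θ z y * h y))
      - ∫ y in (0:ℝ)..s, ((q y : ℂ) - z) * quasiRes φ θ z h y with hWdef
    have hWderiv : ∀ x ∈ Ici (0:ℝ), HasDerivWithinAt W 0 (Ici x) x := by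
      intro x hx
      have k1 := keyA (aD := fun x => ((q x : ℂ) - z) * θ z x) (C := (0:ℂ)) hx
        (hS.θ_ode z x hx) hφh_loc (hmull _ _ hPθc hφh_loc)
      have k2 := keyA (aD := fun x => ((q x : ℂ) - z) * φ z x) (C := Cθ) hx
        (hS.φ_ode z x hx) hθh_loc'
        (hmull _ _ hPφc hθh_loc')
      have k3 : HasDerivWithinAt
          (fun s => ∫ y in (0:ℝ)..s, ((q y : ℂ) - z) * quasiRes φ θ z h y)
          (((q x : ℂ) - z) * quasiRes φ θ z h x) (Ici x) x := by
        apply intervalIntegral.integral_hasDerivWithinAt_right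
        · exact ii_of_icc hqu_loc le_rfl hx
        · refine ⟨Ici 0, ?_, hqu_c.aestronglyMeasurable measurableSet_Ici⟩
          exact mem_of_superset self_mem_nhdsWithin
            (Subset.trans Ioi_subset_Ici_self (Ici_subset_Ici.mpr hx))
        · exact (hqu_c x hx).mono (Subset.trans Ioi_subset_Ici_self (Ici_subset_Ici.mpr hx))
      have hsum := ((k1.add k2).mono (Ici_subset_Ici.mpr hx)).sub k3
      convert hsum using 1
      show (0:ℂ) = ((q x:ℂ) - z) * θ z x * (0 + F x)
        + ((q x:ℂ) - z) * φ z x * (Cθ + ∫ y in (0:ℝ)..x, -(θ z y * h y))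
        - ((q x:ℂ) - z) * quasiRes φ θ z h x
      have e2 : quasiRes φ θ z h x = θ z x * F x + φ z x * Gf x := rfl
      rw [e2, ← hGsplit x hx]
      ring
      · rfl
      · rfl
    have hWcont : ContinuousOn W (Ici 0) := by
      intro y hy
      apply ContinuousWithinAt.sub
      apply ContinuousWithinAt.add
      · exact ((hPθc y hy).mul
          (continuousWithinAt_const.add (cwa_prim hφh_loc le_rfl hy))).sub
          (cwa_prim (hmull _ _ hPθc hφh_loc) le_rfl hy)
      · exact ((hPφc y hy).mul
          (continuousWithinAt_const.add (cwa_prim hθh_loc' le_rfl hy))).sub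
          (cwa_prim (hmull _ _ hPφc hθh_loc') le_rfl hy)
      · exact cwa_prim hqu_loc le_rfl hy
    have hWconst := const_on_Ici' hWcont hWderiv
    have eW : ∀ x ∈ Ici (0:ℝ), W x = (p x : ℂ) * u'f x - ∫ y in (0:ℝ)..x, g y := by
      intro x hx
      have e1 : (∫ y in (0:ℝ)..x, Pθ y * (φ z y * h y))
          + (∫ y in (0:ℝ)..x, Pφ y * -(θ z y * h y)) = -∫ y in (0:ℝ)..x, h y := by
        rw [← intervalIntegral.integral_add
          (ii_of_icc (hmull _ _ hPθc hφh_loc) le_rfl hx)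
          (ii_of_icc (hmull _ _ hPφc hθh_loc') le_rfl hx),
          ← intervalIntegral.integral_neg]
        apply intervalIntegral.integral_congr
        intro y hy
        have hy' : y ∈ Ici (0:ℝ) := by
          rw [uIcc_of_le hx] at hy
          exact hy.1
        have hwy := hwr y hy'
        simp only [hPθ, hPφ]
        linear_combination (-(h y)) * hwy
      have e2 : (∫ y in (0:ℝ)..x, g y)
          = (∫ y in (0:ℝ)..x, ((q y : ℂ) - z) * quasiRes φ θ z h y)
            - ∫ y in (0:ℝ)..x, h y := by
        rw [hg]
        exact intervalIntegral.integral_sub (ii_of_icc hqu_loc le_rfl hx)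
          (ii_of_icc hh_loc le_rfl hx)
      have e3 : quasiRes φ θ z h x = θ z x * F x + φ z x * Gf x := rfl
      rw [hWdef]
      simp only [hPθ, hPφ, hu'f]
      rw [← hGsplit x hx]
      linear_combination (-1 : ℂ) * e1 + e2
    intro x hx
    have h1 := hWconst x hx
    rw [eW x hx, eW 0 self_mem_Ici, intervalIntegral.integral_same] at h1
    linear_combination h1
  -- boundary condition
  have hbc : u'f 0 = (α : ℂ) * quasiRes φ θ z h 0 := by
    have e0 : quasiRes φ θ z h 0 = θ z 0 * F 0 + φ z 0 * Gf 0 := rfl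
    have eF0 : F 0 = 0 := intervalIntegral.integral_same
    rw [hu'f, e0]
    simp only
    rw [hS.θ_init, hS.φ_init, hS.θ_init', hS.φ_init', eF0]
    ring
  -- aeA is in L²
  have haeA : MemLp (aeA q (quasiRes φ θ z h) g) 2 mu := by
    have e : aeA q (quasiRes φ θ z h) g = fun x => z * quasiRes φ θ z h x + h x := by
      funext x
      simp only [aeA, hg]
      ring
    rw [e]
    exact (hMemu.const_mul z).add hh
  refine ⟨u'f, g, fun x => rfl, ⟨hMemu, fun x hx => hu' x hx, hu'c, hbc, hg_loc, hW, haeA⟩, ?_⟩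
  apply Eventually.of_forall
  intro x
  simp only [hg]
  ring


end SLLC
end
end

section
/- (Hilbert–Schmidt property of the quasiresolvent) Assume the LC condition. For every z ∈ ℂ, the kernel K_z defined on (0,∞)×(0,∞) by K_z(x,y) = θ_z(x)·φ_z(y) for y ≤ x and K_z(x,y) = φ_z(x)·θ_z(y) for y > x belongs to L²((0,∞)×(0,∞)); consequently the integral operator 𝓡(z) with kernel K_z is a Hilbert–Schmidt, in particular bounded, operator on L². -/
open MeasureTheory Set Filter
open scoped ENNReal NNReal

noncomputable section

namespace SLLC

instance : SFinite mu := inferInstanceAs (SFinite (volume.restrict (Ioi 0)))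

instance : SigmaFinite mu := inferInstanceAs (SigmaFinite (volume.restrict (Ioi 0)))

lemma holder_mu {f g : ℝ → ℂ} (hf : AEStronglyMeasurable f mu) (hg : AEStronglyMeasurable g mu) :
    (∫⁻ y, (‖f y‖₊ : ℝ≥0∞) * (‖g y‖₊ : ℝ≥0∞) ∂mu) ≤ eLpNorm f 2 mu * eLpNorm g 2 mu := by
  have h22 : Real.HolderConjugate 2 2 := Real.holderConjugate_iff.mpr ⟨one_lt_two, by norm_num⟩
  have H := ENNReal.lintegral_mul_le_Lp_mul_Lq mu h22 hf.enorm hg.enorm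
  simp only [Pi.mul_apply] at H
  rw [eLpNorm_eq_lintegral_rpow_enorm_toReal two_ne_zero ENNReal.ofNat_ne_top,
      eLpNorm_eq_lintegral_rpow_enorm_toReal two_ne_zero ENNReal.ofNat_ne_top]
  simpa [enorm_eq_nnnorm] using H

lemma enorm_setIntegral_le {f g : ℝ → ℂ} (hf : AEStronglyMeasurable f mu)
    (hg : AEStronglyMeasurable g mu) {s : Set ℝ} (hsub : s ⊆ Ioi 0) :
    (‖∫ y in s, f y * g y‖₊ : ℝ≥0∞) ≤ eLpNorm f 2 mu * eLpNorm g 2 mu := by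
  calc (‖∫ y in s, f y * g y‖₊ : ℝ≥0∞)
      ≤ ∫⁻ y in s, ‖f y * g y‖₊ ∂volume := enorm_integral_le_lintegral_enorm _
    _ = ∫⁻ y in s, (‖f y‖₊ : ℝ≥0∞) * ‖g y‖₊ ∂volume := by
        simp only [nnnorm_mul, ENNReal.coe_mul]
    _ ≤ ∫⁻ y in Ioi 0, (‖f y‖₊ : ℝ≥0∞) * ‖g y‖₊ ∂volume := lintegral_mono_set hsub
    _ ≤ _ := holder_mu hf hg

/-- Hilbert–Schmidt property of the quasiresolvent. Assume the LC condition.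
The kernel `K_z(x,y) = θ_z(x)φ_z(y)` for `y ≤ x` and `φ_z(x)θ_z(y)` for `y > x` is square
integrable on `(0,∞)×(0,∞)`; consequently the integral operator `𝓡(z)` is Hilbert–Schmidt,
in particular bounded, on `L²`. -/
theorem stmt_7 (p p' q : ℝ → ℝ) (α : ℝ) (φ φD θ θD : ℂ → ℝ → ℂ)
    (hS : Setting p p' q α φ φD θ θD) (z : ℂ) :
    MemLp (fun w : ℝ × ℝ => if w.2 ≤ w.1 then θ z w.1 * φ z w.2 else φ z w.1 * θ z w.2) 2
      (mu.prod mu) ∧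
    ∃ C : ENNReal, C ≠ ⊤ ∧ ∀ h : ℝ → ℂ, MemLp h 2 mu →
      MemLp (quasiRes φ θ z h) 2 mu ∧ eLpNorm (quasiRes φ θ z h) 2 mu ≤ C * eLpNorm h 2 mu := by
  classical
  have hΦm : MemLp (φ z) 2 mu := hS.lc_φ z
  have hΘm : MemLp (θ z) 2 mu := hS.lc_θ z
  set A := eLpNorm (φ z) 2 mu with hA_def
  set B := eLpNorm (θ z) 2 mu with hB_def
  have hA : A ≠ ⊤ := hΦm.eLpNorm_ne_top
  have hB : B ≠ ⊤ := hΘm.eLpNorm_ne_top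
  -- measurability of the kernel
  have hΦ1 : AEStronglyMeasurable (fun w : ℝ × ℝ => φ z w.1) (mu.prod mu) :=
    hΦm.1.comp_quasiMeasurePreserving Measure.quasiMeasurePreserving_fst
  have hΦ2 : AEStronglyMeasurable (fun w : ℝ × ℝ => φ z w.2) (mu.prod mu) :=
    hΦm.1.comp_quasiMeasurePreserving Measure.quasiMeasurePreserving_snd
  have hΘ1 : AEStronglyMeasurable (fun w : ℝ × ℝ => θ z w.1) (mu.prod mu) :=
    hΘm.1.comp_quasiMeasurePreserving Measure.quasiMeasurePreserving_fst
  have hΘ2 : AEStronglyMeasurable (fun w : ℝ × ℝ => θ z w.2) (mu.prod mu) :=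
    hΘm.1.comp_quasiMeasurePreserving Measure.quasiMeasurePreserving_snd
  have hSet : MeasurableSet {w : ℝ × ℝ | w.2 ≤ w.1} :=
    measurableSet_le measurable_snd measurable_fst
  have hKm : AEStronglyMeasurable
      (fun w : ℝ × ℝ => if w.2 ≤ w.1 then θ z w.1 * φ z w.2 else φ z w.1 * θ z w.2)
      (mu.prod mu) := by
    have hrw : (fun w : ℝ × ℝ => if w.2 ≤ w.1 then θ z w.1 * φ z w.2 else φ z w.1 * θ z w.2)
        = Set.piecewise {w : ℝ × ℝ | w.2 ≤ w.1} (fun w => θ z w.1 * φ z w.2)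
            (fun w => φ z w.1 * θ z w.2) := by
      funext w; by_cases h : w.2 ≤ w.1 <;> simp [Set.piecewise, h]
    rw [hrw]
    exact AEStronglyMeasurable.piecewise hSet ((hΘ1.mul hΦ2).restrict) ((hΦ1.mul hΘ2).restrict)
  have hsqΦ : (∫⁻ y, (‖φ z y‖₊ : ℝ≥0∞) ^ (2:ℝ) ∂mu) < ⊤ := by
    have := lintegral_rpow_enorm_lt_top_of_eLpNorm_lt_top (f := φ z) (μ := mu)
      two_ne_zero ENNReal.ofNat_ne_top hΦm.2
    simpa [enorm_eq_nnnorm] using this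
  have hsqΘ : (∫⁻ y, (‖θ z y‖₊ : ℝ≥0∞) ^ (2:ℝ) ∂mu) < ⊤ := by
    have := lintegral_rpow_enorm_lt_top_of_eLpNorm_lt_top (f := θ z) (μ := mu)
      two_ne_zero ENNReal.ofNat_ne_top hΘm.2
    simpa [enorm_eq_nnnorm] using this
  have hmΦ : AEMeasurable (fun y => (‖φ z y‖₊ : ℝ≥0∞) ^ (2:ℝ)) mu := hΦm.1.enorm.pow_const _
  have hmΘ : AEMeasurable (fun y => (‖θ z y‖₊ : ℝ≥0∞) ^ (2:ℝ)) mu := hΘm.1.enorm.pow_const _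
  have hKint : (∫⁻ w, (‖(if w.2 ≤ w.1 then θ z w.1 * φ z w.2 else φ z w.1 * θ z w.2 : ℂ)‖₊ : ℝ≥0∞)
      ^ (2:ℝ) ∂(mu.prod mu)) < ⊤ := by
    have hle : ∀ w : ℝ × ℝ,
        (‖(if w.2 ≤ w.1 then θ z w.1 * φ z w.2 else φ z w.1 * θ z w.2 : ℂ)‖₊ : ℝ≥0∞) ^ (2:ℝ)
        ≤ (‖θ z w.1‖₊ : ℝ≥0∞) ^ (2:ℝ) * (‖φ z w.2‖₊ : ℝ≥0∞) ^ (2:ℝ)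
          + (‖φ z w.1‖₊ : ℝ≥0∞) ^ (2:ℝ) * (‖θ z w.2‖₊ : ℝ≥0∞) ^ (2:ℝ) := by
      intro w
      by_cases h : w.2 ≤ w.1
      · rw [if_pos h]
        refine le_trans (le_of_eq ?_) le_self_add
        rw [nnnorm_mul, ENNReal.coe_mul, ENNReal.mul_rpow_of_nonneg _ _ (by norm_num : (0:ℝ) ≤ 2)]
      · rw [if_neg h]
        refine le_trans (le_of_eq ?_) le_add_self
        rw [nnnorm_mul, ENNReal.coe_mul, ENNReal.mul_rpow_of_nonneg _ _ (by norm_num : (0:ℝ) ≤ 2)]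
    have hmes1 : AEMeasurable
        (fun w : ℝ × ℝ => (‖θ z w.1‖₊ : ℝ≥0∞) ^ (2:ℝ) * (‖φ z w.2‖₊ : ℝ≥0∞) ^ (2:ℝ))
        (mu.prod mu) :=
      (hmΘ.comp_quasiMeasurePreserving Measure.quasiMeasurePreserving_fst).mul
        (hmΦ.comp_quasiMeasurePreserving Measure.quasiMeasurePreserving_snd)
    calc (∫⁻ w, (‖(if w.2 ≤ w.1 then θ z w.1 * φ z w.2 else φ z w.1 * θ z w.2 : ℂ)‖₊ : ℝ≥0∞)
          ^ (2:ℝ) ∂(mu.prod mu))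
        ≤ ∫⁻ w : ℝ × ℝ, ((‖θ z w.1‖₊ : ℝ≥0∞) ^ (2:ℝ) * (‖φ z w.2‖₊ : ℝ≥0∞) ^ (2:ℝ)
            + (‖φ z w.1‖₊ : ℝ≥0∞) ^ (2:ℝ) * (‖θ z w.2‖₊ : ℝ≥0∞) ^ (2:ℝ)) ∂(mu.prod mu) :=
          lintegral_mono hle
      _ = (∫⁻ w : ℝ × ℝ, (‖θ z w.1‖₊ : ℝ≥0∞) ^ (2:ℝ) * (‖φ z w.2‖₊ : ℝ≥0∞) ^ (2:ℝ) ∂(mu.prod mu))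
          + ∫⁻ w : ℝ × ℝ, (‖φ z w.1‖₊ : ℝ≥0∞) ^ (2:ℝ) * (‖θ z w.2‖₊ : ℝ≥0∞) ^ (2:ℝ)
            ∂(mu.prod mu) := lintegral_add_left' hmes1 _
      _ = (∫⁻ y, (‖θ z y‖₊ : ℝ≥0∞) ^ (2:ℝ) ∂mu) * (∫⁻ y, (‖φ z y‖₊ : ℝ≥0∞) ^ (2:ℝ) ∂mu)
          + (∫⁻ y, (‖φ z y‖₊ : ℝ≥0∞) ^ (2:ℝ) ∂mu) * ∫⁻ y, (‖θ z y‖₊ : ℝ≥0∞) ^ (2:ℝ) ∂mu := by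
          rw [lintegral_prod_mul hmΘ hmΦ, lintegral_prod_mul hmΦ hmΘ]
      _ < ⊤ := ENNReal.add_lt_top.2
          ⟨ENNReal.mul_lt_top hsqΘ hsqΦ, ENNReal.mul_lt_top hsqΦ hsqΘ⟩
  have hK : MemLp
      (fun w : ℝ × ℝ => if w.2 ≤ w.1 then θ z w.1 * φ z w.2 else φ z w.1 * θ z w.2) 2
      (mu.prod mu) := by
    refine ⟨hKm, ?_⟩
    rw [eLpNorm_lt_top_iff_lintegral_rpow_enorm_lt_top two_ne_zero ENNReal.ofNat_ne_top]
    simpa [enorm_eq_nnnorm] using hKint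
  refine ⟨hK, A * B + B * A,
    ENNReal.add_ne_top.2 ⟨ENNReal.mul_ne_top hA hB, ENNReal.mul_ne_top hB hA⟩, fun h hh => ?_⟩
  set H := eLpNorm h 2 mu with hH_def
  have hH : H ≠ ⊤ := hh.eLpNorm_ne_top
  have hae : ∀ᵐ x ∂mu, x ∈ Ioi (0:ℝ) := ae_restrict_mem measurableSet_Ioi
  have hAH : A * H ≠ ⊤ := ENNReal.mul_ne_top hA hH
  have hBH : B * H ≠ ⊤ := ENNReal.mul_ne_top hB hH
  set a := (A * H).toReal with ha_def
  set b := (B * H).toReal with hb_def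
  have ha0 : 0 ≤ a := ENNReal.toReal_nonneg
  have hb0 : 0 ≤ b := ENNReal.toReal_nonneg
  have bd1 : ∀ x ∈ Ioi (0:ℝ), ‖∫ y in (0:ℝ)..x, φ z y * h y‖ ≤ a := by
    intro x hx
    have h1 : (‖∫ y in (0:ℝ)..x, φ z y * h y‖₊ : ℝ≥0∞) ≤ A * H := by
      rw [intervalIntegral.integral_of_le (le_of_lt hx)]
      exact enorm_setIntegral_le hΦm.1 hh.1 Ioc_subset_Ioi_self
    have := ENNReal.toReal_mono hAH h1
    rw [ENNReal.coe_toReal, coe_nnnorm] at this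
    exact this
  have bd2 : ∀ x ∈ Ioi (0:ℝ), ‖∫ y in Ioi x, θ z y * h y‖ ≤ b := by
    intro x hx
    have h1 : (‖∫ y in Ioi x, θ z y * h y‖₊ : ℝ≥0∞) ≤ B * H :=
      enorm_setIntegral_le hΘm.1 hh.1 (Ioi_subset_Ioi (le_of_lt hx))
    have := ENNReal.toReal_mono hBH h1
    rw [ENNReal.coe_toReal, coe_nnnorm] at this
    exact this
  -- pointwise bound by majorant
  have hptwise : ∀ x ∈ Ioi (0:ℝ),
      ‖quasiRes φ θ z h x‖ ≤ ‖a * ‖θ z x‖ + b * ‖φ z x‖‖ := by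
    intro x hx
    have h1 : ‖θ z x * ∫ y in (0:ℝ)..x, φ z y * h y‖ ≤ ‖θ z x‖ * a := by
      rw [norm_mul]
      exact mul_le_mul_of_nonneg_left (bd1 x hx) (norm_nonneg _)
    have h2 : ‖φ z x * ∫ y in Ioi x, θ z y * h y‖ ≤ ‖φ z x‖ * b := by
      rw [norm_mul]
      exact mul_le_mul_of_nonneg_left (bd2 x hx) (norm_nonneg _)
    have hnn : 0 ≤ a * ‖θ z x‖ + b * ‖φ z x‖ :=
      add_nonneg (mul_nonneg ha0 (norm_nonneg _)) (mul_nonneg hb0 (norm_nonneg _))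
    rw [Real.norm_of_nonneg hnn]
    calc ‖quasiRes φ θ z h x‖ ≤ ‖θ z x * ∫ y in (0:ℝ)..x, φ z y * h y‖
          + ‖φ z x * ∫ y in Ioi x, θ z y * h y‖ := norm_add_le _ _
      _ ≤ ‖θ z x‖ * a + ‖φ z x‖ * b := add_le_add h1 h2
      _ = a * ‖θ z x‖ + b * ‖φ z x‖ := by ring
  -- a.e. strong measurability of the quasiresolvent
  have hΦc : ContinuousOn (φ z) (Ici 0) := fun x hx => (hS.φ_deriv z x hx).continuousWithinAt
  have hΘc : ContinuousOn (θ z) (Ici 0) := fun x hx => (hS.θ_deriv z x hx).continuousWithinAt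
  have hφh : Integrable (fun y => φ z y * h y) mu := by
    have h1 : MemLp ((φ z) • h) 1 mu := hh.smul hΦm
    exact memLp_one_iff_integrable.mp h1
  have hθh : Integrable (fun y => θ z y * h y) mu := by
    have h1 : MemLp ((θ z) • h) 1 mu := hh.smul hΘm
    exact memLp_one_iff_integrable.mp h1
  have hφh' : IntegrableOn (fun y => φ z y * h y) (Ioi 0) volume := hφh
  have hθh' : IntegrableOn (fun y => θ z y * h y) (Ioi 0) volume := hθh
  set f₁ := (Ioi (0:ℝ)).indicator (fun y => φ z y * h y) with hf₁_def
  set g₁ := (Ioi (0:ℝ)).indicator (fun y => θ z y * h y) with hg₁_def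
  have hf₁i : Integrable f₁ volume := hφh'.integrable_indicator measurableSet_Ioi
  have hg₁i : Integrable g₁ volume := hθh'.integrable_indicator measurableSet_Ioi
  set F := fun x => ∫ y in (0:ℝ)..x, f₁ y with hF_def
  set P := fun x => ∫ y in (0:ℝ)..x, g₁ y with hP_def
  have hFc : Continuous F := hf₁i.continuous_primitive 0
  have hPc : Continuous P := hg₁i.continuous_primitive 0
  set T := ∫ y in Ioi (0:ℝ), θ z y * h y with hT_def
  set ψ := fun x => θ z x * F x + φ z x * (T - P x) with hψ_def
  have hψm : AEStronglyMeasurable ψ mu := by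
    have hc : ContinuousOn ψ (Ioi 0) :=
      ((hΘc.mono Ioi_subset_Ici_self).mul hFc.continuousOn).add
        ((hΦc.mono Ioi_subset_Ici_self).mul ((continuous_const.sub hPc).continuousOn))
    exact hc.aestronglyMeasurable measurableSet_Ioi
  have heq : ∀ x ∈ Ioi (0:ℝ), quasiRes φ θ z h x = ψ x := by
    intro x hx
    have hx0 : (0:ℝ) ≤ x := le_of_lt hx
    have e1 : (∫ y in (0:ℝ)..x, φ z y * h y) = F x := by
      simp only [hF_def]
      rw [intervalIntegral.integral_of_le hx0, intervalIntegral.integral_of_le hx0]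
      refine setIntegral_congr_fun measurableSet_Ioc (fun y hy => ?_)
      rw [hf₁_def, indicator_of_mem (Ioc_subset_Ioi_self hy)]
    have e2 : (∫ y in Ioi x, θ z y * h y) = T - P x := by
      have hIx : (∫ y in Ioi x, θ z y * h y) = ∫ y in Ioi x, g₁ y := by
        refine setIntegral_congr_fun measurableSet_Ioi (fun y hy => ?_)
        rw [hg₁_def, indicator_of_mem (Ioi_subset_Ioi hx0 hy)]
      have hTg : T = ∫ y in Ioi (0:ℝ), g₁ y := by
        rw [hT_def]
        refine setIntegral_congr_fun measurableSet_Ioi (fun y hy => ?_)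
        rw [hg₁_def, indicator_of_mem hy]
      have hsplit : (∫ y in Ioi (0:ℝ), g₁ y)
          = (∫ y in Ioc 0 x, g₁ y) + ∫ y in Ioi x, g₁ y := by
        rw [← setIntegral_union (Ioc_disjoint_Ioi le_rfl) measurableSet_Ioi
          hg₁i.integrableOn hg₁i.integrableOn, Ioc_union_Ioi_eq_Ioi hx0]
      have hPx : P x = ∫ y in Ioc 0 x, g₁ y := by
        simp only [hP_def]
        rw [intervalIntegral.integral_of_le hx0]
      rw [hIx, hTg, hsplit, hPx]; ring
    show θ z x * (∫ y in (0:ℝ)..x, φ z y * h y) + φ z x * (∫ y in Ioi x, θ z y * h y) = ψ x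
    rw [e1, e2]
  have haeq : quasiRes φ θ z h =ᵐ[mu] ψ := by
    filter_upwards [hae] with x hx using heq x hx
  have hqm : AEStronglyMeasurable (quasiRes φ θ z h) mu := hψm.congr haeq.symm
  -- the norm bound
  have hmaj : eLpNorm (quasiRes φ θ z h) 2 mu
      ≤ eLpNorm (fun x => a * ‖θ z x‖ + b * ‖φ z x‖) 2 mu := by
    apply eLpNorm_mono_ae
    filter_upwards [hae] with x hx using hptwise x hx
  have hm1 : AEStronglyMeasurable (fun x => a * ‖θ z x‖) mu :=
    aestronglyMeasurable_const.mul hΘm.1.norm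
  have hm2 : AEStronglyMeasurable (fun x => b * ‖φ z x‖) mu :=
    aestronglyMeasurable_const.mul hΦm.1.norm
  have hsum : eLpNorm (fun x => a * ‖θ z x‖ + b * ‖φ z x‖) 2 mu
      ≤ (A * H) * B + (B * H) * A := by
    calc eLpNorm (fun x => a * ‖θ z x‖ + b * ‖φ z x‖) 2 mu
        ≤ eLpNorm (fun x => a * ‖θ z x‖) 2 mu + eLpNorm (fun x => b * ‖φ z x‖) 2 mu :=
          eLpNorm_add_le hm1 hm2 one_le_two
      _ = (A * H) * B + (B * H) * A := by
          have e1 : (fun x => a * ‖θ z x‖) = a • (fun x => ‖θ z x‖) := rfl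
          have e2 : (fun x => b * ‖φ z x‖) = b • (fun x => ‖φ z x‖) := rfl
          rw [e1, e2, eLpNorm_const_smul, eLpNorm_const_smul, eLpNorm_norm, eLpNorm_norm]
          rw [show ‖a‖ₑ = ENNReal.ofReal a from Real.enorm_eq_ofReal ha0,
            show ‖b‖ₑ = ENNReal.ofReal b from Real.enorm_eq_ofReal hb0,
            ha_def, hb_def, ENNReal.ofReal_toReal hAH, ENNReal.ofReal_toReal hBH]
  have hfinal : eLpNorm (quasiRes φ θ z h) 2 mu ≤ (A * B + B * A) * H := by
    refine le_trans (hmaj.trans hsum) (le_of_eq ?_)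
    ring
  refine ⟨⟨hqm, lt_of_le_of_lt hfinal ?_⟩, hfinal⟩
  exact ENNReal.mul_lt_top
    (ENNReal.add_ne_top.2 ⟨ENNReal.mul_ne_top hA hB, ENNReal.mul_ne_top hB hA⟩).lt_top hH.lt_top


end SLLC
end
end

section
/- (Corollary 3.2: description of all solutions in the maximal domain) Assume the LC condition. Let z ∈ ℂ, h ∈ L², and let u ∈ D(A_max) satisfy −(p u′)′ + q u − z u = h almost everywhere on (0,∞). Then there exists Γ ∈ ℂ such that u(x) = Γ·φ_z(x) + (𝓡(z)h)(x) for all x ≥ 0. -/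
open MeasureTheory Set Filter

noncomputable section

namespace SLLC

section Aux

lemma ftc_aux {f f' : ℝ → ℂ} (hf : ∀ y ∈ Ici (0:ℝ), HasDerivWithinAt f (f' y) (Ici 0) y)
    (hf' : ContinuousOn f' (Ici 0)) {a x : ℝ} (ha : 0 ≤ a) (hax : a ≤ x) :
    ∫ y in a..x, f' y = f x - f a := by
  have hc : ContinuousOn f (Ici 0) := fun y hy => (hf y hy).continuousWithinAt
  have hsub : Icc a x ⊆ Ici (0:ℝ) := fun y hy => ha.trans hy.1
  refine intervalIntegral.integral_eq_sub_of_hasDeriv_right_of_le hax (hc.mono hsub)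
    (fun y hy => ?_) ?_
  · exact ((hf y (ha.trans hy.1.le)).hasDerivAt
      (Ici_mem_nhds (ha.trans_lt hy.1))).hasDerivWithinAt
  · have : ContinuousOn f' (uIcc a x) := by
      rw [uIcc_of_le hax]; exact hf'.mono hsub
    exact this.intervalIntegrable

lemma ibp_aux {ψ ψD g : ℝ → ℂ}
    (hψd : ∀ y ∈ Ici (0:ℝ), HasDerivWithinAt ψ (ψD y) (Ici 0) y)
    (hψDc : ContinuousOn ψD (Ici 0))
    (hg : ∀ r : ℝ, IntegrableOn g (Icc 0 r))
    {x : ℝ} (hx : 0 ≤ x) :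
    (∫ y in (0:ℝ)..x, g y) * ψ x
      = ∫ y in (0:ℝ)..x, (g y * ψ y + (∫ s in (0:ℝ)..y, g s) * ψD y) := by
  have hψc : ContinuousOn ψ (Ici 0) := fun y hy => (hψd y hy).continuousWithinAt
  have hsub : Icc (0:ℝ) x ⊆ Ici 0 := fun y hy => hy.1
  have hgx : IntegrableOn g (Ioc 0 x) := (hg x).mono_set Ioc_subset_Icc_self
  have hψDx : IntegrableOn ψD (Ioc 0 x) :=
    ((hψDc.mono hsub).integrableOn_compact isCompact_Icc).mono_set Ioc_subset_Icc_self
  set ν := volume.restrict (Ioc (0:ℝ) x) with hν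
  set F : ℝ × ℝ → ℂ := {p : ℝ × ℝ | p.2 ≤ p.1}.indicator (fun p => g p.2 * ψD p.1) with hF
  have hT : MeasurableSet {p : ℝ × ℝ | p.2 ≤ p.1} :=
    measurableSet_le measurable_snd measurable_fst
  have hbase : Integrable (fun p : ℝ × ℝ => g p.2 * ψD p.1) (ν.prod ν) := by
    have := MeasureTheory.Integrable.mul_prod (μ := ν) (ν := ν) (L := ℂ) hψDx hgx
    simpa [mul_comm] using this
  have hFint : Integrable F (ν.prod ν) := hbase.indicator hT
  have inner1 : ∀ y ∈ Ioc (0:ℝ) x,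
      (∫ s, F (y, s) ∂ν) = (∫ s in (0:ℝ)..y, g s) * ψD y := by
    intro y hy
    have h1 : (fun s => F (y, s)) = (Iic y).indicator (fun s => g s * ψD y) := by
      funext s; by_cases hs : s ≤ y <;> simp [hF, Set.indicator_apply, hs]
    rw [h1, MeasureTheory.integral_indicator measurableSet_Iic, hν,
      Measure.restrict_restrict measurableSet_Iic]
    have h2 : Iic y ∩ Ioc 0 x = Ioc 0 y := by
      ext s; simp only [mem_inter_iff, mem_Iic, mem_Ioc]
      exact ⟨fun ⟨ha, hb, _⟩ => ⟨hb, ha⟩, fun ⟨ha, hb⟩ => ⟨hb, ha, hb.trans hy.2⟩⟩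
    rw [h2, intervalIntegral.integral_of_le hy.1.le]
    rw [MeasureTheory.integral_mul_const]
  have inner2 : ∀ s ∈ Ioc (0:ℝ) x,
      (∫ y, F (y, s) ∂ν) = g s * (ψ x - ψ s) := by
    intro s hs
    have h1 : (fun y => F (y, s)) = (Ici s).indicator (fun y => g s * ψD y) := by
      funext y; by_cases hsy : s ≤ y <;> simp [hF, Set.indicator_apply, hsy]
    rw [h1, MeasureTheory.integral_indicator measurableSet_Ici, hν,
      Measure.restrict_restrict measurableSet_Ici]
    have h2 : Ici s ∩ Ioc 0 x = Icc s x := by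
      ext y; simp only [mem_inter_iff, mem_Ici, mem_Ioc, mem_Icc]
      exact ⟨fun ⟨ha, _, hc⟩ => ⟨ha, hc⟩, fun ⟨ha, hb⟩ => ⟨ha, hs.1.trans_le ha, hb⟩⟩
    rw [h2, MeasureTheory.integral_Icc_eq_integral_Ioc,
      ← intervalIntegral.integral_of_le hs.2, intervalIntegral.integral_const_mul,
      ftc_aux hψd hψDc hs.1.le hs.2]
  have swap : ∫ y, (∫ s, F (y, s) ∂ν) ∂ν = ∫ s, (∫ y, F (y, s) ∂ν) ∂ν :=
    MeasureTheory.integral_integral_swap hFint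
  have big : ∫ y in Ioc (0:ℝ) x, (∫ s in (0:ℝ)..y, g s) * ψD y
      = ∫ s in Ioc (0:ℝ) x, g s * (ψ x - ψ s) := by
    calc ∫ y in Ioc (0:ℝ) x, (∫ s in (0:ℝ)..y, g s) * ψD y
        = ∫ y, (∫ s, F (y, s) ∂ν) ∂ν :=
          (setIntegral_congr_fun measurableSet_Ioc fun y hy => (inner1 y hy).symm).symm ▸ rfl
      _ = ∫ s, (∫ y, F (y, s) ∂ν) ∂ν := swap
      _ = ∫ s in Ioc (0:ℝ) x, g s * (ψ x - ψ s) :=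
          setIntegral_congr_fun measurableSet_Ioc fun s hs => inner2 s hs
  have hGc : ContinuousOn (fun y => ∫ s in (0:ℝ)..y, g s) (Icc 0 x) := by
    have h0 : IntegrableOn g (uIcc (0:ℝ) x) := by rw [uIcc_of_le hx]; exact hg x
    have := intervalIntegral.continuousOn_primitive_interval (μ := volume) h0
    rwa [uIcc_of_le hx] at this
  have hgψ : IntervalIntegrable (fun y => g y * ψ y) volume 0 x := by
    rw [intervalIntegrable_iff_integrableOn_Icc_of_le hx]
    exact (hg x).mul_continuousOn (hψc.mono hsub) isCompact_Icc
  have hGψD : IntervalIntegrable (fun y => (∫ s in (0:ℝ)..y, g s) * ψD y) volume 0 x := by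
    rw [intervalIntegrable_iff_integrableOn_Icc_of_le hx]
    exact (hGc.mul (hψDc.mono hsub)).integrableOn_compact isCompact_Icc
  rw [intervalIntegral.integral_add hgψ hGψD]
  have e1 : ∫ y in (0:ℝ)..x, (∫ s in (0:ℝ)..y, g s) * ψD y
      = ∫ s in Ioc (0:ℝ) x, g s * (ψ x - ψ s) := by
    rw [intervalIntegral.integral_of_le hx]; exact big
  have e2 : ∫ s in Ioc (0:ℝ) x, g s * (ψ x - ψ s)
      = (∫ s in Ioc (0:ℝ) x, g s) * ψ x - ∫ s in Ioc (0:ℝ) x, g s * ψ s := by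
    have hint1 : IntegrableOn (fun s => g s * ψ x) (Ioc 0 x) := hgx.mul_const _
    have hint2 : IntegrableOn (fun s => g s * ψ s) (Ioc 0 x) := by
      have h3 := hgψ; rw [intervalIntegrable_iff_integrableOn_Icc_of_le hx] at h3
      exact h3.mono_set Ioc_subset_Icc_self
    have h4 : (fun s => g s * (ψ x - ψ s)) = fun s => g s * ψ x - g s * ψ s := by
      funext s; ring
    rw [h4, MeasureTheory.integral_sub hint1 hint2, MeasureTheory.integral_mul_const]
  rw [e1, e2, intervalIntegral.integral_of_le hx, intervalIntegral.integral_of_le hx]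
  ring

lemma lagrange_aux {p q : ℝ → ℝ} {z : ℂ} {h u u' g ψ ψD : ℝ → ℂ}
    (hppos : ∀ y ∈ Ici (0:ℝ), 0 < p y)
    (hpc : ContinuousOn (fun y => (p y : ℂ)) (Ici 0))
    (hqc : ContinuousOn (fun y => (q y : ℂ)) (Ici 0))
    (hud : ∀ y ∈ Ici (0:ℝ), HasDerivWithinAt u (u' y) (Ici 0) y)
    (hu'c : ContinuousOn u' (Ici 0))
    (hgi : ∀ r : ℝ, IntegrableOn g (Icc 0 r))
    (hpu' : ∀ y ∈ Ici (0:ℝ), (p y : ℂ) * u' y = (p 0 : ℂ) * u' 0 + ∫ s in (0:ℝ)..y, g s)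
    (heq : ∀ᵐ y ∂(volume.restrict (Ioi (0:ℝ))), -g y + (q y : ℂ) * u y - z * u y = h y)
    (hψd : ∀ y ∈ Ici (0:ℝ), HasDerivWithinAt ψ (ψD y) (Ici 0) y)
    (hode : ∀ y ∈ Ici (0:ℝ),
      HasDerivWithinAt (fun t => (p t:ℂ) * ψD t) (((q y:ℂ) - z) * ψ y) (Ici 0) y)
    {x : ℝ} (hx : 0 ≤ x) :
    (p x:ℂ) * ψD x * u x - (p x:ℂ) * u' x * ψ x
      = (p 0:ℂ) * ψD 0 * u 0 - (p 0:ℂ) * u' 0 * ψ 0 + ∫ y in (0:ℝ)..x, ψ y * h y := by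
  have hpne : ∀ y ∈ Ici (0:ℝ), (p y : ℂ) ≠ 0 := fun y hy =>
    Complex.ofReal_ne_zero.mpr (hppos y hy).ne'
  have hψc : ContinuousOn ψ (Ici 0) := fun y hy => (hψd y hy).continuousWithinAt
  have huc : ContinuousOn u (Ici 0) := fun y hy => (hud y hy).continuousWithinAt
  have hpψDc : ContinuousOn (fun y => (p y:ℂ) * ψD y) (Ici 0) := fun y hy =>
    (hode y hy).continuousWithinAt
  have hψDc : ContinuousOn ψD (Ici 0) := by
    have h1 : ContinuousOn (fun y => ((p y:ℂ))⁻¹ * ((p y:ℂ) * ψD y)) (Ici 0) :=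
      (hpc.inv₀ hpne).mul hpψDc
    exact h1.congr fun y hy => (inv_mul_cancel_left₀ (hpne y hy) (ψD y)).symm
  set c : ℂ := (p 0:ℂ) * u' 0 with hc
  set P : ℝ → ℂ := fun y => c + ∫ s in (0:ℝ)..y, g s with hPdef
  have hP : ∀ y ∈ Ici (0:ℝ), (p y:ℂ) * u' y = P y := hpu'
  have hPc : ContinuousOn P (Ici 0) := (hpc.mul hu'c).congr fun y hy => (hP y hy).symm
  have hsub : Icc (0:ℝ) x ⊆ Ici 0 := fun y hy => hy.1
  have hI1c : ContinuousOn (fun y => ((q y:ℂ) - z) * ψ y * u y + (p y:ℂ) * ψD y * u' y)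
      (Ici 0) := (((hqc.sub continuousOn_const).mul hψc).mul huc).add (hpψDc.mul hu'c)
  have h1 : ∫ y in (0:ℝ)..x, (((q y:ℂ) - z) * ψ y * u y + (p y:ℂ) * ψD y * u' y)
      = (p x:ℂ) * ψD x * u x - (p 0:ℂ) * ψD 0 * u 0 := by
    have hd : ∀ y ∈ Ici (0:ℝ), HasDerivWithinAt (fun t => (p t:ℂ) * ψD t * u t)
        (((q y:ℂ) - z) * ψ y * u y + (p y:ℂ) * ψD y * u' y) (Ici 0) y := fun y hy =>
      (hode y hy).mul (hud y hy)
    exact ftc_aux hd hI1c le_rfl hx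
  have hibp := ibp_aux hψd hψDc hgi hx
  have hcψ : ∫ y in (0:ℝ)..x, c * ψD y = c * ψ x - c * ψ 0 :=
    ftc_aux (fun y hy => (hψd y hy).const_mul c) (continuousOn_const.mul hψDc) le_rfl hx
  have hgψ : IntervalIntegrable (fun y => g y * ψ y) volume 0 x := by
    rw [intervalIntegrable_iff_integrableOn_Icc_of_le hx]
    exact (hgi x).mul_continuousOn (hψc.mono hsub) isCompact_Icc
  have hGψD : IntervalIntegrable (fun y => (∫ s in (0:ℝ)..y, g s) * ψD y) volume 0 x := by
    rw [intervalIntegrable_iff_integrableOn_Icc_of_le hx]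
    have hGc : ContinuousOn (fun y => ∫ s in (0:ℝ)..y, g s) (Icc 0 x) := by
      have h0 : IntegrableOn g (uIcc (0:ℝ) x) := by rw [uIcc_of_le hx]; exact hgi x
      have := intervalIntegral.continuousOn_primitive_interval (μ := volume) h0
      rwa [uIcc_of_le hx] at this
    exact (hGc.mul (hψDc.mono hsub)).integrableOn_compact isCompact_Icc
  have hcψD : IntervalIntegrable (fun y => c * ψD y) volume 0 x := by
    rw [intervalIntegrable_iff_integrableOn_Icc_of_le hx]
    exact (continuousOn_const.mul (hψDc.mono hsub)).integrableOn_compact isCompact_Icc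
  have h2 : P x * ψ x - c * ψ 0 = ∫ y in (0:ℝ)..x, (g y * ψ y + P y * ψD y) := by
    have hsplit : ∫ y in (0:ℝ)..x, (g y * ψ y + P y * ψD y)
        = (∫ y in (0:ℝ)..x, (g y * ψ y + (∫ s in (0:ℝ)..y, g s) * ψD y))
          + ∫ y in (0:ℝ)..x, c * ψD y := by
      rw [← intervalIntegral.integral_add (hgψ.add hGψD) hcψD]
      apply intervalIntegral.integral_congr
      intro y _
      simp only [hPdef]
      ring
    rw [hsplit, ← hibp, hcψ]
    simp only [hPdef]
    ring
  have hI1 : IntervalIntegrable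
      (fun y => ((q y:ℂ) - z) * ψ y * u y + (p y:ℂ) * ψD y * u' y) volume 0 x := by
    rw [intervalIntegrable_iff_integrableOn_Icc_of_le hx]
    exact ((hI1c.mono hsub)).integrableOn_compact isCompact_Icc
  have hPψD : IntervalIntegrable (fun y => P y * ψD y) volume 0 x := by
    rw [intervalIntegrable_iff_integrableOn_Icc_of_le hx]
    exact ((hPc.mono hsub).mul (hψDc.mono hsub)).integrableOn_compact isCompact_Icc
  have h3 : (∫ y in (0:ℝ)..x, (((q y:ℂ) - z) * ψ y * u y + (p y:ℂ) * ψD y * u' y))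
        - ∫ y in (0:ℝ)..x, (g y * ψ y + P y * ψD y)
      = ∫ y in (0:ℝ)..x, ψ y * h y := by
    rw [← intervalIntegral.integral_sub hI1 (hgψ.add hPψD)]
    have hae : ∀ᵐ y ∂(volume : Measure ℝ), y ∈ Set.uIoc (0:ℝ) x →
        (((q y:ℂ) - z) * ψ y * u y + (p y:ℂ) * ψD y * u' y) - (g y * ψ y + P y * ψD y)
          = ψ y * h y := by
      have heq' := (ae_restrict_iff' measurableSet_Ioi).mp heq
      filter_upwards [heq'] with y hy hymem
      rw [uIoc_of_le hx] at hymem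
      have h0y : (0:ℝ) < y := hymem.1
      have e1 := hy h0y
      have e2 := hP y h0y.le
      linear_combination ψ y * e1 + ψD y * e2
    exact intervalIntegral.integral_congr_ae hae
  linear_combination (-1 : ℂ) * h1 - h2 + h3 - ψ x * (hP x hx)

end Aux

/-- Corollary 3.2: all solutions in the maximal domain. Assume the LC
condition. If `u ∈ D(A_max)` satisfies `−(p u')' + q u − z u = h` a.e. with `h ∈ L²`, then
`u = Γ·φ_z + 𝓡(z)h` on `[0,∞)` for some `Γ ∈ ℂ`. -/
theorem stmt_8 (p p' q : ℝ → ℝ) (α : ℝ) (φ φD θ θD : ℂ → ℝ → ℂ)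
    (hS : Setting p p' q α φ φD θ θD)
    (z : ℂ) (h u u' g : ℝ → ℂ) (hh : MemLp h 2 mu)
    (hum : InMaxDomW p q α u u' g)
    (heq : ∀ᵐ x ∂mu, -g x + (q x : ℂ) * u x - z * u x = h x) :
    ∃ Γ : ℂ, ∀ x ∈ Ici (0 : ℝ), u x = Γ * φ z x + quasiRes φ θ z h x := by
  obtain ⟨hu2, hud, hu'c, hbc, hgi, hpu', hA⟩ := hum
  have hpne : ∀ y ∈ Ici (0:ℝ), (p y : ℂ) ≠ 0 := fun y hy =>
    Complex.ofReal_ne_zero.mpr (hS.p_pos y hy).ne'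
  have hpcR : ContinuousOn p (Ici 0) := fun y hy => (hS.p_deriv y hy).continuousWithinAt
  have hpc : ContinuousOn (fun y => (p y : ℂ)) (Ici 0) :=
    Complex.continuous_ofReal.comp_continuousOn hpcR
  have hqc : ContinuousOn (fun y => (q y : ℂ)) (Ici 0) :=
    Complex.continuous_ofReal.comp_continuousOn hS.q_cont
  -- the Wronskian of φ and θ is constant ≡ 1 (in the form p(φ'θ - θ'φ) = 1)
  have hK : ∀ x ∈ Ici (0:ℝ),
      (p x:ℂ) * φD z x * θ z x - (p x:ℂ) * θD z x * φ z x = 1 := by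
    intro x hx
    have hd : ∀ y ∈ Ici (0:ℝ), HasDerivWithinAt
        (fun t => (p t:ℂ) * φD z t * θ z t - (p t:ℂ) * θD z t * φ z t) 0 (Ici 0) y := by
      intro y hy
      have hder := ((hS.φ_ode z y hy).mul (hS.θ_deriv z y hy)).sub
        ((hS.θ_ode z y hy).mul (hS.φ_deriv z y hy))
      convert hder using 1
      · rfl
      · rfl
      · ring
    have hF := ftc_aux hd continuousOn_const le_rfl hx
    simp only [intervalIntegral.integral_zero] at hF
    have hpinv : (p 0:ℂ) * (p 0:ℂ)⁻¹ = 1 := mul_inv_cancel₀ (hpne 0 self_mem_Ici)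
    have h00 : (p 0:ℂ) * φD z 0 * θ z 0 - (p 0:ℂ) * θD z 0 * φ z 0 = 1 := by
      rw [hS.φ_init' z, hS.θ_init z, hS.θ_init' z, hS.φ_init z]
      linear_combination hpinv
    linear_combination -hF + h00
  -- integrability of θ_z · h on (0,∞)
  have hθh : IntegrableOn (fun y => θ z y * h y) (Ioi 0) volume := by
    have hm := MemLp.smul (r := 1) hh (hS.lc_θ z)
    have h2 := memLp_one_iff_integrable.mp hm
    exact h2
  refine ⟨u 0 - ∫ y in Ioi (0:ℝ), θ z y * h y, ?_⟩
  intro x hx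
  have hWφ := lagrange_aux hS.p_pos hpc hqc hud hu'c hgi hpu' heq
    (hS.φ_deriv z) (hS.φ_ode z) hx
  have hWθ := lagrange_aux hS.p_pos hpc hqc hud hu'c hgi hpu' heq
    (hS.θ_deriv z) (hS.θ_ode z) hx
  rw [hS.φ_init' z, hS.φ_init z] at hWφ
  rw [hS.θ_init' z, hS.θ_init z] at hWθ
  have hKx := hK x hx
  have hpinv : (p 0:ℂ) * (p 0:ℂ)⁻¹ = 1 := mul_inv_cancel₀ (hpne 0 self_mem_Ici)
  have hsplit : ∫ y in (0:ℝ)..x, θ z y * h y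
      = (∫ y in Ioi (0:ℝ), θ z y * h y) - ∫ y in Ioi x, θ z y * h y := by
    rw [intervalIntegral.integral_of_le hx]
    have hun : Ioc (0:ℝ) x ∪ Ioi x = Ioi 0 := Ioc_union_Ioi_eq_Ioi hx
    rw [← hun, MeasureTheory.setIntegral_union (Ioc_disjoint_Ioi le_rfl) measurableSet_Ioi
      (hθh.mono_set Ioc_subset_Ioi_self) (hθh.mono_set (Ioi_subset_Ioi hx))]
    ring
  have htail : ∫ y in Ioi x, θ z y * h y
      = (∫ y in Ioi (0:ℝ), θ z y * h y) - ∫ y in (0:ℝ)..x, θ z y * h y := by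
    rw [hsplit]; ring
  simp only [quasiRes]
  rw [htail]
  linear_combination θ z x * hWφ - φ z x * hWθ - u x * hKx
    - θ z x * (p 0:ℂ) * hbc + φ z x * u 0 * hpinv

end SLLC
end
end

section
/- (Proposition 3.4) Assume the LC condition. For every z ∈ ℂ and every h ∈ L², the function 𝓡(z)h − (∫₀^∞ h(y)·φ_z(y) dy)·θ̃_z belongs to D(A_min). -/
open MeasureTheory Set Filter

noncomputable section

namespace SLLC

open scoped ENNReal NNReal

theorem ofReal_hasDerivWithinAt {f : ℝ → ℝ} {u x : ℝ} {s : Set ℝ}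
    (hf : HasDerivWithinAt f u s x) :
    HasDerivWithinAt (fun y => ((f y : ℝ) : ℂ)) (u : ℂ) s x := by
  exact hf.ofReal_comp

/-- Second derivative of a solution. -/
def DD (p p' q : ℝ → ℝ) (z : ℂ) (f fD : ℝ → ℂ) : ℝ → ℂ :=
  fun x => ((p x : ℂ))⁻¹ * (((q x : ℂ) - z) * f x - (p' x : ℂ) * fD x)

section Core
variable {p p' q : ℝ → ℝ} {z : ℂ} {f fD : ℝ → ℂ}

theorem core_cont (hd : ∀ x ∈ Ici (0:ℝ), HasDerivWithinAt f (fD x) (Ici 0) x) :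
    ContinuousOn f (Ici 0) := fun x hx => (hd x hx).continuousWithinAt

theorem core_contP (hp : ∀ x ∈ Ici (0:ℝ), HasDerivWithinAt p (p' x) (Ici 0) x) :
    ContinuousOn p (Ici 0) := fun x hx => (hp x hx).continuousWithinAt

theorem core_pne (hppos : ∀ x ∈ Ici (0:ℝ), 0 < p x) :
    ∀ x ∈ Ici (0:ℝ), ((p x : ℂ)) ≠ 0 := fun x hx =>
  Complex.ofReal_ne_zero.mpr (hppos x hx).ne'

theorem core_contD' (hppos : ∀ x ∈ Ici (0:ℝ), 0 < p x)
    (hp : ∀ x ∈ Ici (0:ℝ), HasDerivWithinAt p (p' x) (Ici 0) x)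
    (hode : ∀ x ∈ Ici (0:ℝ),
      HasDerivWithinAt (fun y => (p y : ℂ) * fD y) (((q x : ℂ) - z) * f x) (Ici 0) x) :
    ContinuousOn fD (Ici 0) := by
  have h1 : ContinuousOn (fun y => (p y : ℂ) * fD y) (Ici 0) :=
    fun x hx => (hode x hx).continuousWithinAt
  have h2 : ContinuousOn (fun y => ((p y : ℂ))⁻¹ * ((p y : ℂ) * fD y)) (Ici 0) := by
    refine ContinuousOn.mul (ContinuousOn.inv₀ ?_ (core_pne hppos)) h1
    exact Complex.continuous_ofReal.comp_continuousOn (core_contP hp)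
  refine h2.congr fun y hy => ?_
  field_simp [core_pne hppos y hy]

theorem core_DD (hppos : ∀ x ∈ Ici (0:ℝ), 0 < p x)
    (hp : ∀ x ∈ Ici (0:ℝ), HasDerivWithinAt p (p' x) (Ici 0) x)
    (hode : ∀ x ∈ Ici (0:ℝ),
      HasDerivWithinAt (fun y => (p y : ℂ) * fD y) (((q x : ℂ) - z) * f x) (Ici 0) x) :
    ∀ x ∈ Ici (0:ℝ), HasDerivWithinAt fD (DD p p' q z f fD x) (Ici 0) x := by
  intro x hx
  have hpne := core_pne hppos x hx
  have hinv : HasDerivWithinAt (fun y => ((p y : ℂ))⁻¹)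
      (-(((p x : ℂ)) ^ 2)⁻¹ * (p' x : ℂ)) (Ici 0) x := by
    simpa [Function.comp_def] using
      (hasDerivAt_inv hpne).comp_hasDerivWithinAt x (ofReal_hasDerivWithinAt (hp x hx))
  have hmul := hinv.mul (hode x hx)
  have heq : ∀ y ∈ Ici (0:ℝ), fD y = ((p y : ℂ))⁻¹ * ((p y : ℂ) * fD y) := fun y hy => by
    field_simp [core_pne hppos y hy]
  have hval : -(((p x : ℂ)) ^ 2)⁻¹ * (p' x : ℂ) * ((p x : ℂ) * fD x)
      + ((p x : ℂ))⁻¹ * (((q x : ℂ) - z) * f x) = DD p p' q z f fD x := by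
    simp only [DD]
    field_simp
    ring
  exact hval ▸ (hmul.congr heq (heq x hx))

theorem core_ode' (hppos : ∀ x ∈ Ici (0:ℝ), 0 < p x) : ∀ x ∈ Ici (0:ℝ),
    (p' x : ℂ) * fD x + (p x : ℂ) * DD p p' q z f fD x = ((q x : ℂ) - z) * f x := by
  intro x hx
  have hpne := core_pne hppos x hx
  simp only [DD]
  field_simp
  ring

theorem core_contDD (hppos : ∀ x ∈ Ici (0:ℝ), 0 < p x)
    (hp : ∀ x ∈ Ici (0:ℝ), HasDerivWithinAt p (p' x) (Ici 0) x)
    (hd : ∀ x ∈ Ici (0:ℝ), HasDerivWithinAt f (fD x) (Ici 0) x)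
    (hode : ∀ x ∈ Ici (0:ℝ),
      HasDerivWithinAt (fun y => (p y : ℂ) * fD y) (((q x : ℂ) - z) * f x) (Ici 0) x)
    (hq : ContinuousOn q (Ici 0)) (hp' : ContinuousOn p' (Ici 0)) :
    ContinuousOn (DD p p' q z f fD) (Ici 0) := by
  refine ContinuousOn.mul (ContinuousOn.inv₀ ?_ (core_pne hppos)) (ContinuousOn.sub
    (ContinuousOn.mul ?_ (core_cont hd)) (ContinuousOn.mul ?_ (core_contD' hppos hp hode)))
  · exact Complex.continuous_ofReal.comp_continuousOn (core_contP hp)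
  · exact ContinuousOn.sub (Complex.continuous_ofReal.comp_continuousOn hq) continuousOn_const
  · exact Complex.continuous_ofReal.comp_continuousOn hp'

end Core

section W
variable {p p' q : ℝ → ℝ} {z : ℂ} {φ φD θ θD : ℝ → ℂ}

theorem wronskian (hppos : ∀ x ∈ Ici (0:ℝ), 0 < p x)
    (hφd : ∀ x ∈ Ici (0:ℝ), HasDerivWithinAt φ (φD x) (Ici 0) x)
    (hφode : ∀ x ∈ Ici (0:ℝ),
      HasDerivWithinAt (fun y => (p y : ℂ) * φD y) (((q x : ℂ) - z) * φ x) (Ici 0) x)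
    (hθd : ∀ x ∈ Ici (0:ℝ), HasDerivWithinAt θ (θD x) (Ici 0) x)
    (hθode : ∀ x ∈ Ici (0:ℝ),
      HasDerivWithinAt (fun y => (p y : ℂ) * θD y) (((q x : ℂ) - z) * θ x) (Ici 0) x)
    (hφ0 : φ 0 = 1) (hθ0 : θ 0 = 0) (hθD0 : θD 0 = -((p 0 : ℂ))⁻¹) :
    ∀ x ∈ Ici (0:ℝ), (p x : ℂ) * θD x * φ x - (p x : ℂ) * φD x * θ x = -1 := by
  have hp0 : ((p 0 : ℂ)) ≠ 0 :=
    Complex.ofReal_ne_zero.mpr (hppos 0 self_mem_Ici).ne'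
  set W : ℝ → ℂ := fun y => ((p y : ℂ) * θD y) * φ y - ((p y : ℂ) * φD y) * θ y with hW
  have hWd : ∀ x ∈ Ici (0:ℝ), HasDerivWithinAt W 0 (Ici 0) x := by
    intro x hx
    have h1 := ((hθode x hx).mul (hφd x hx)).sub ((hφode x hx).mul (hθd x hx))
    have h2 : ((q x : ℂ) - z) * θ x * φ x + (p x : ℂ) * θD x * φD x -
        (((q x : ℂ) - z) * φ x * θ x + (p x : ℂ) * φD x * θD x) = 0 := by ring
    rwa [h2] at h1
  have hW0 : W 0 = -1 := by
    simp only [hW, hθ0, hφ0, hθD0, mul_zero, mul_one, sub_zero]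
    field_simp
  intro x hx
  have hconst : W x = W 0 :=
    constant_of_has_deriv_right_zero
      (fun y hy => ((hWd y hy.1).continuousWithinAt).mono Icc_subset_Ici_self)
      (fun y hy => (hWd y hy.1).mono (Ici_subset_Ici.mpr hy.1)) x ⟨hx, le_rfl⟩

  calc (p x : ℂ) * θD x * φ x - (p x : ℂ) * φD x * θ x = W x := by simp only [hW]
    _ = -1 := by rw [hconst, hW0]
end W

section Cut
variable {ω : ℝ → ℝ}

theorem Cutoff.smooth (hω : Cutoff ω) : ContDiff ℝ ((⊤:ℕ∞) : WithTop ℕ∞) ω := hω.1.of_le (by simp)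

theorem Cutoff.smoothD (hω : Cutoff ω) : ContDiff ℝ ((⊤:ℕ∞) : WithTop ℕ∞) (deriv ω) :=
  (contDiff_infty_iff_deriv.mp hω.smooth).2

theorem Cutoff.contDeriv (hω : Cutoff ω) : Continuous (deriv ω) :=
  hω.smoothD.continuous

theorem Cutoff.contDeriv2 (hω : Cutoff ω) : Continuous (deriv (deriv ω)) :=
  (contDiff_infty_iff_deriv.mp hω.smoothD).2.continuous

theorem Cutoff.hasDeriv (hω : Cutoff ω) (x : ℝ) : HasDerivAt ω (deriv ω x) x :=
  ((hω.smooth.differentiable (by simp)) x).hasDerivAt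

theorem Cutoff.hasDeriv2 (hω : Cutoff ω) (x : ℝ) : HasDerivAt (deriv ω) (deriv (deriv ω) x) x :=
  ((hω.smoothD.differentiable (by simp)) x).hasDerivAt

theorem deriv_eq_zero_of_lt {c : ℝ} {f : ℝ → ℝ} (hf : ∀ y < c, f y = 0) {x : ℝ} (hx : x < c) :
    deriv f x = 0 := by
  have : f =ᶠ[nhds x] (fun _ => 0) := by
    filter_upwards [Iio_mem_nhds hx] with y hy using hf y hy
  rw [this.deriv_eq, deriv_const]

theorem deriv_eq_zero_of_gt {c : ℝ} {f : ℝ → ℝ} {d : ℝ} (hf : ∀ y > c, f y = d) {x : ℝ}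
    (hx : x > c) : deriv f x = 0 := by
  have : f =ᶠ[nhds x] (fun _ => d) := by
    filter_upwards [Ioi_mem_nhds hx] with y hy using hf y hy
  rw [this.deriv_eq, deriv_const]
end Cut

theorem mu_ae_mem : ∀ᵐ x ∂mu, x ∈ Ioi (0:ℝ) := ae_restrict_mem measurableSet_Ioi
theorem holder_eLpNorm {f g : ℝ → ℂ} {μ : Measure ℝ} (hf : MemLp f 2 μ) (hg : MemLp g 2 μ) :
    eLpNorm (fun x => f x * g x) 1 μ ≤ eLpNorm f 2 μ * eLpNorm g 2 μ :=
  eLpNorm_le_eLpNorm_mul_eLpNorm_of_nnnorm (p := 2) (q := 2) hf.1 hg.1 (fun a b => a * b) 1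
    (Eventually.of_forall fun x => by simp [nnnorm_mul])
    (hpqr := ⟨by simp [ENNReal.inv_two_add_inv_two]⟩) |>.trans_eq (by simp)
theorem holder_integrable {f g : ℝ → ℂ} {μ : Measure ℝ} (hf : MemLp f 2 μ)
    (hg : MemLp g 2 μ) : Integrable (fun x => f x * g x) μ := by
  rw [← memLp_one_iff_integrable]
  exact ⟨hf.1.mul hg.1, lt_of_le_of_lt (holder_eLpNorm hf hg) (ENNReal.mul_lt_top hf.2 hg.2)⟩
theorem holder_ofReal {f g : ℝ → ℂ} {μ : Measure ℝ} (hf : MemLp f 2 μ) (hg : MemLp g 2 μ) :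
    ENNReal.ofReal (∫ x, ‖f x * g x‖ ∂μ) ≤ eLpNorm f 2 μ * eLpNorm g 2 μ := by
  rw [ofReal_integral_norm_eq_lintegral_enorm (holder_integrable hf hg),
    ← eLpNorm_one_eq_lintegral_enorm]
  exact holder_eLpNorm hf hg
theorem eLpNorm_bound_aux {v θf φf : ℝ → ℂ} {a b : ℝ} (ha : 0 ≤ a) (hb : 0 ≤ b)
    (hθm : AEStronglyMeasurable θf mu) (hφm : AEStronglyMeasurable φf mu)
    (hbd : ∀ x ∈ Ioi (0:ℝ), ‖v x‖ ≤ a * ‖θf x‖ + b * ‖φf x‖) :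
    eLpNorm v 2 mu ≤ ENNReal.ofReal a * eLpNorm θf 2 mu + ENNReal.ofReal b * eLpNorm φf 2 mu := by
  have h1 : eLpNorm v 2 mu ≤ eLpNorm (fun x => a * ‖θf x‖ + b * ‖φf x‖) 2 mu := by
    refine eLpNorm_mono_ae ?_
    filter_upwards [mu_ae_mem] with x hx
    have h2 := hbd x hx
    have h3 : (0:ℝ) ≤ a * ‖θf x‖ + b * ‖φf x‖ := by positivity
    rwa [Real.norm_of_nonneg h3]
  refine h1.trans ((eLpNorm_add_le ((hθm.norm).const_mul a) ((hφm.norm).const_mul b)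
    one_le_two).trans ?_)
  gcongr
  · refine (eLpNorm_const_smul_le (c := a) (f := fun x => ‖θf x‖) (p := 2) (μ := mu)).trans ?_
    rw [eLpNorm_norm, Real.enorm_eq_ofReal ha]
  · refine (eLpNorm_const_smul_le (c := b) (f := fun x => ‖φf x‖) (p := 2) (μ := mu)).trans ?_
    rw [eLpNorm_norm, Real.enorm_eq_ofReal hb]
theorem integral_Ioi_split {f : ℝ → ℂ} (hf : IntegrableOn f (Ioi (0:ℝ)) volume) {x : ℝ}
    (hx : 0 ≤ x) :
    ∫ y in Ioi (0:ℝ), f y = (∫ y in (0:ℝ)..x, f y) + ∫ y in Ioi x, f y := by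
  rw [intervalIntegral.integral_of_le hx,
    ← setIntegral_union (Ioc_disjoint_Ioi le_rfl) measurableSet_Ioi
      (hf.mono_set Ioc_subset_Ioi_self) (hf.mono_set (Ioi_subset_Ioi hx)),
    Ioc_union_Ioi_eq_Ioi hx]
theorem norm_primitive_le {f : ℝ → ℂ} (hf : IntegrableOn f (Ioi (0:ℝ)) volume) {x : ℝ}
    (hx : 0 ≤ x) :
    ‖∫ y in (0:ℝ)..x, f y‖ ≤ ∫ y in Ioi (0:ℝ), ‖f y‖ := by
  rw [intervalIntegral.integral_of_le hx]
  refine (norm_integral_le_integral_norm _).trans ?_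
  exact setIntegral_mono_set hf.norm (Eventually.of_forall fun y => norm_nonneg _)
    (HasSubset.Subset.eventuallyLE Ioc_subset_Ioi_self)
theorem norm_tail_le {f : ℝ → ℂ} (hf : IntegrableOn f (Ioi (0:ℝ)) volume) {x : ℝ}
    (hx : 0 ≤ x) :
    ‖∫ y in Ioi x, f y‖ ≤ ∫ y in Ioi (0:ℝ), ‖f y‖ := by
  refine (norm_integral_le_integral_norm _).trans ?_
  exact setIntegral_mono_set hf.norm (Eventually.of_forall fun y => norm_nonneg _)
    (HasSubset.Subset.eventuallyLE (Ioi_subset_Ioi hx))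

theorem quasi_bound {φf θf : ℝ → ℂ} (hφ : MemLp φf 2 mu) (hθ : MemLp θf 2 mu)
    {ω : ℝ → ℝ} {M : ℝ} (hM : 0 ≤ M) (hωbd : ∀ x, |ω x| ≤ M)
    {k : ℝ → ℂ} (hk : MemLp k 2 mu) {v : ℝ → ℂ} {d : ℂ}
    (hd : ‖d‖ ≤ ∫ y in Ioi (0:ℝ), ‖φf y * k y‖)
    (hv : ∀ x ∈ Ioi (0:ℝ), v x = θf x * (∫ y in (0:ℝ)..x, φf y * k y)
        + φf x * (∫ y in Ioi x, θf y * k y) - d * ((ω x : ℂ) * θf x)) :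
    eLpNorm v 2 mu ≤ (ENNReal.ofReal (1 + M) + 1) * eLpNorm φf 2 mu * eLpNorm θf 2 mu
      * eLpNorm k 2 mu := by
  have hiφ : Integrable (fun y => φf y * k y) mu := holder_integrable hφ hk
  have hiθ : Integrable (fun y => θf y * k y) mu := holder_integrable hθ hk
  set Aφ : ℝ := ∫ y in Ioi (0:ℝ), ‖φf y * k y‖ with hAφdef
  set Aθ : ℝ := ∫ y in Ioi (0:ℝ), ‖θf y * k y‖ with hAθdef
  have hAφ0 : 0 ≤ Aφ := integral_nonneg fun y => norm_nonneg _
  have hAθ0 : 0 ≤ Aθ := integral_nonneg fun y => norm_nonneg _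
  have hbd : ∀ x ∈ Ioi (0:ℝ), ‖v x‖ ≤ (Aφ * (1 + M)) * ‖θf x‖ + Aθ * ‖φf x‖ := by
    intro x hx
    have hx0 : (0:ℝ) ≤ x := le_of_lt hx
    rw [hv x hx]
    have b1 : ‖θf x * (∫ y in (0:ℝ)..x, φf y * k y)‖ ≤ ‖θf x‖ * Aφ := by
      rw [norm_mul]
      exact mul_le_mul_of_nonneg_left (norm_primitive_le hiφ hx0) (norm_nonneg _)
    have b2 : ‖φf x * (∫ y in Ioi x, θf y * k y)‖ ≤ ‖φf x‖ * Aθ := by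
      rw [norm_mul]
      exact mul_le_mul_of_nonneg_left (norm_tail_le hiθ hx0) (norm_nonneg _)
    have b3 : ‖d * ((ω x : ℂ) * θf x)‖ ≤ Aφ * M * ‖θf x‖ := by
      rw [norm_mul, norm_mul, Complex.norm_real, Real.norm_eq_abs]
      have := mul_le_mul hd (mul_le_mul_of_nonneg_right (hωbd x) (norm_nonneg (θf x)))
        (by positivity) hAφ0
      calc ‖d‖ * (|ω x| * ‖θf x‖) ≤ Aφ * (M * ‖θf x‖) := this
        _ = Aφ * M * ‖θf x‖ := by ring
    calc ‖θf x * (∫ y in (0:ℝ)..x, φf y * k y) + φf x * (∫ y in Ioi x, θf y * k y)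
          - d * ((ω x : ℂ) * θf x)‖
        ≤ ‖θf x * (∫ y in (0:ℝ)..x, φf y * k y) + φf x * (∫ y in Ioi x, θf y * k y)‖
          + ‖d * ((ω x : ℂ) * θf x)‖ := norm_sub_le _ _
      _ ≤ ‖θf x * (∫ y in (0:ℝ)..x, φf y * k y)‖ + ‖φf x * (∫ y in Ioi x, θf y * k y)‖
          + ‖d * ((ω x : ℂ) * θf x)‖ := by gcongr; exact norm_add_le _ _
      _ ≤ ‖θf x‖ * Aφ + ‖φf x‖ * Aθ + Aφ * M * ‖θf x‖ := by gcongr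
      _ = (Aφ * (1 + M)) * ‖θf x‖ + Aθ * ‖φf x‖ := by ring
  refine (eLpNorm_bound_aux (by positivity) hAθ0 hθ.1 hφ.1 hbd).trans ?_
  have e1 : ENNReal.ofReal (Aφ * (1 + M)) = ENNReal.ofReal Aφ * ENNReal.ofReal (1 + M) :=
    ENNReal.ofReal_mul hAφ0
  have hφA : ENNReal.ofReal Aφ ≤ eLpNorm φf 2 mu * eLpNorm k 2 mu := holder_ofReal hφ hk
  have hθA : ENNReal.ofReal Aθ ≤ eLpNorm θf 2 mu * eLpNorm k 2 mu := holder_ofReal hθ hk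
  calc ENNReal.ofReal (Aφ * (1 + M)) * eLpNorm θf 2 mu + ENNReal.ofReal Aθ * eLpNorm φf 2 mu
      = ENNReal.ofReal Aφ * ENNReal.ofReal (1 + M) * eLpNorm θf 2 mu
        + ENNReal.ofReal Aθ * eLpNorm φf 2 mu := by rw [e1]
    _ ≤ eLpNorm φf 2 mu * eLpNorm k 2 mu * ENNReal.ofReal (1 + M) * eLpNorm θf 2 mu
        + eLpNorm θf 2 mu * eLpNorm k 2 mu * eLpNorm φf 2 mu := by gcongr
    _ = (ENNReal.ofReal (1 + M) + 1) * eLpNorm φf 2 mu * eLpNorm θf 2 mu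
        * eLpNorm k 2 mu := by ring

theorem integrableOn_of_mu {f : ℝ → ℂ} (hf : Integrable f mu) :
    IntegrableOn f (Ioi (0:ℝ)) volume := hf

/-- Proposition 3.4. Assume the LC condition. For every `z ∈ ℂ` and `h ∈ L²`,
the function `𝓡(z)h − (∫₀^∞ h·φ_z)·θ̃_z` belongs to `D(A_min)`. -/
theorem stmt_9 (p p' q : ℝ → ℝ) (α : ℝ) (φ φD θ θD : ℂ → ℝ → ℂ) (ω : ℝ → ℝ)
    (hS : Setting p p' q α φ φD θ θD) (hω : Cutoff ω)
    (z : ℂ) (h : ℝ → ℂ) (hh : MemLp h 2 mu) :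
    InMinDom p p' q α (fun x =>
      quasiRes φ θ z h x - (∫ y in Ioi (0 : ℝ), h y * φ z y) * ((ω x : ℂ) * θ z x)) := by
  classical
  obtain ⟨hωsm, hω0ex, hωRex⟩ := hω
  obtain ⟨ε, hε, hω0⟩ := hω0ex
  obtain ⟨R, hωR⟩ := hωRex
  have hωc : Cutoff ω := ⟨hωsm, ⟨ε, hε, hω0⟩, ⟨R, hωR⟩⟩
  have hωcont : Continuous ω := hωc.smooth.continuous
  obtain ⟨C, hC⟩ := isCompact_Icc.exists_bound_of_continuousOn
    (s := Icc ε R) hωcont.continuousOn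
  set M : ℝ := max C 1 with hMdef
  have hM0 : (0:ℝ) ≤ M := le_trans zero_le_one (le_max_right _ _)
  have hωbd : ∀ x, |ω x| ≤ M := by
    intro x
    rcases lt_or_ge x ε with hx | hx
    · rw [hω0 x hx]; simpa using hM0
    rcases le_or_gt R x with hx' | hx'
    · rw [hωR x hx', abs_one]; exact le_max_right C 1
    · exact le_trans (by simpa [Real.norm_eq_abs] using hC x ⟨hx, hx'.le⟩) (le_max_left _ _)
  have hppos := hS.p_pos
  have hpd := hS.p_deriv
  have hφd := hS.φ_deriv z
  have hφode := hS.φ_ode z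
  have hθd := hS.θ_deriv z
  have hθode := hS.θ_ode z
  have mφ := hS.lc_φ z
  have mθ := hS.lc_θ z
  have contφ : ContinuousOn (φ z) (Ici 0) := core_cont hφd
  have contθ : ContinuousOn (θ z) (Ici 0) := core_cont hθd
  have contφD : ContinuousOn (φD z) (Ici 0) := core_contD' hppos hpd hφode
  have contθD : ContinuousOn (θD z) (Ici 0) := core_contD' hppos hpd hθode
  have hφDD := core_DD hppos hpd hφode
  have hθDD := core_DD hppos hpd hθode
  have hφode' := core_ode' (p' := p') (q := q) (z := z) (f := φ z) (fD := φD z) hppos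
  have hθode' := core_ode' (p' := p') (q := q) (z := z) (f := θ z) (fD := θD z) hppos
  have contDDφ := core_contDD hppos hpd hφd hφode hS.q_cont hS.p'_cont
  have contDDθ := core_contDD hppos hpd hθd hθode hS.q_cont hS.p'_cont
  have hwr := wronskian hppos hφd hφode hθd hθode (hS.φ_init z) (hS.θ_init z) (hS.θ_init' z)
  set φc : ℝ → ℂ := fun y => φ z (max y 0) with hφcdef
  set θc : ℝ → ℂ := fun y => θ z (max y 0) with hθcdef
  have contφc : Continuous φc :=
    contφ.comp_continuous (continuous_id.max continuous_const) fun y => le_max_right y 0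
  have contθc : Continuous θc :=
    contθ.comp_continuous (continuous_id.max continuous_const) fun y => le_max_right y 0
  have hφc_eq : ∀ y : ℝ, 0 ≤ y → φc y = φ z y := fun y hy => by
    simp only [hφcdef, max_eq_left hy]
  have hθc_eq : ∀ y : ℝ, 0 ≤ y → θc y = θ z y := fun y hy => by
    simp only [hθcdef, max_eq_left hy]
  set c : ℂ := ∫ y in Ioi (0:ℝ), h y * φ z y with hcdef
  set u : ℝ → ℂ := fun x => quasiRes φ θ z h x - c * ((ω x : ℂ) * θ z x) with hudef
  have hiφh : Integrable (fun y => φ z y * h y) mu := holder_integrable mφ hh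
  have hiθh : Integrable (fun y => θ z y * h y) mu := holder_integrable mθ hh
  have hc_bd : ‖c‖ ≤ ∫ y in Ioi (0:ℝ), ‖φ z y * h y‖ := by
    rw [hcdef]
    refine (norm_integral_le_integral_norm _).trans (le_of_eq ?_)
    exact setIntegral_congr_fun measurableSet_Ioi fun y _ => by
      rw [norm_mul, norm_mul, mul_comm]
  have hu_eq : ∀ x ∈ Ioi (0:ℝ), u x = θ z x * (∫ y in (0:ℝ)..x, φ z y * h y)
      + φ z x * (∫ y in Ioi x, θ z y * h y) - c * ((ω x : ℂ) * θ z x) := by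
    intro x _
    simp only [hudef, quasiRes]
  -- eLpNorm bound for u
  set K : ℝ≥0∞ := (ENNReal.ofReal (1 + M) + 1) * eLpNorm (φ z) 2 mu * eLpNorm (θ z) 2 mu
    with hKdef
  have hK_ne_top : K ≠ ⊤ := by
    rw [hKdef]
    exact (ENNReal.mul_lt_top (ENNReal.mul_lt_top
      (ENNReal.add_lt_top.mpr ⟨ENNReal.ofReal_lt_top, ENNReal.one_lt_top⟩) mφ.2) mθ.2).ne
  have hu_elp : eLpNorm u 2 mu ≤ K * eLpNorm h 2 mu := by
    rw [hKdef]
    exact quasi_bound mφ mθ hM0 hωbd hh hc_bd hu_eq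
  -- a.e. strong measurability of u
  have haesm_primφ : AEStronglyMeasurable (fun x => ∫ y in (0:ℝ)..x, φ z y * h y) mu := by
    have hf1int : Integrable ((Ioi (0:ℝ)).indicator fun y => φ z y * h y) volume :=
      (integrable_indicator_iff measurableSet_Ioi).mpr hiφh
    have hcont : Continuous fun x => ∫ y in (0:ℝ)..x,
        (Ioi (0:ℝ)).indicator (fun y => φ z y * h y) y :=
      intervalIntegral.continuous_primitive (fun a b => hf1int.intervalIntegrable) 0
    refine hcont.aestronglyMeasurable.congr ?_
    filter_upwards [mu_ae_mem] with x hx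
    rw [intervalIntegral.integral_of_le (le_of_lt hx),
      intervalIntegral.integral_of_le (le_of_lt hx)]
    exact setIntegral_congr_fun measurableSet_Ioc fun y hy =>
      indicator_of_mem (Ioc_subset_Ioi_self hy) _
  have haesm_tailθ : AEStronglyMeasurable (fun x => ∫ y in Ioi x, θ z y * h y) mu := by
    have hf2int : Integrable ((Ioi (0:ℝ)).indicator fun y => θ z y * h y) volume :=
      (integrable_indicator_iff measurableSet_Ioi).mpr hiθh
    have hcont : Continuous fun x => (∫ y in Ioi (0:ℝ), θ z y * h y) -
        ∫ y in (0:ℝ)..x, (Ioi (0:ℝ)).indicator (fun y => θ z y * h y) y :=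
      continuous_const.sub
        (intervalIntegral.continuous_primitive (fun a b => hf2int.intervalIntegrable) 0)
    refine hcont.aestronglyMeasurable.congr ?_
    filter_upwards [mu_ae_mem] with x hx
    have hprim : ∫ y in (0:ℝ)..x, (Ioi (0:ℝ)).indicator (fun y => θ z y * h y) y
        = ∫ y in (0:ℝ)..x, θ z y * h y := by
      rw [intervalIntegral.integral_of_le (le_of_lt hx),
        intervalIntegral.integral_of_le (le_of_lt hx)]
      exact setIntegral_congr_fun measurableSet_Ioc fun y hy =>
        indicator_of_mem (Ioc_subset_Ioi_self hy) _
    rw [hprim, integral_Ioi_split hiθh (le_of_lt hx)]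
    ring
  have hu_aesm : AEStronglyMeasurable u mu := by
    simp only [hudef]
    have : AEStronglyMeasurable (fun x => quasiRes φ θ z h x) mu := by
      simp only [quasiRes]
      exact (mθ.1.mul haesm_primφ).add (mφ.1.mul haesm_tailθ)
    exact this.sub ((aestronglyMeasurable_const.mul
      ((Complex.continuous_ofReal.comp hωcont).aestronglyMeasurable.mul mθ.1)))
  have humem : MemLp u 2 mu :=
    ⟨hu_aesm, lt_of_le_of_lt hu_elp
      (ENNReal.mul_lt_top (lt_of_le_of_ne (le_top) hK_ne_top) hh.2)⟩
  -- E and w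
  set dω : ℝ → ℝ := deriv ω with hdωdef
  set ddω : ℝ → ℝ := deriv (deriv ω) with hddωdef
  have hcdω : Continuous dω := hωc.contDeriv
  have hcddω : Continuous ddω := hωc.contDeriv2
  set E : ℝ → ℂ := fun x => ((p' x : ℂ) * (dω x : ℂ) + (p x : ℂ) * (ddω x : ℂ)) * θ z x
    + 2 * (p x : ℂ) * (dω x : ℂ) * θD z x with hEdef
  have contpC : ContinuousOn (fun x => ((p x : ℝ) : ℂ)) (Ici 0) :=
    Complex.continuous_ofReal.comp_continuousOn (core_contP hpd)
  have contp'C : ContinuousOn (fun x => ((p' x : ℝ) : ℂ)) (Ici 0) :=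
    Complex.continuous_ofReal.comp_continuousOn hS.p'_cont
  have contdωC : Continuous (fun x => ((dω x : ℝ) : ℂ)) := Complex.continuous_ofReal.comp hcdω
  have contddωC : Continuous (fun x => ((ddω x : ℝ) : ℂ)) := Complex.continuous_ofReal.comp hcddω
  have contωC : Continuous (fun x => ((ω x : ℝ) : ℂ)) := Complex.continuous_ofReal.comp hωcont
  have hE_cont : ContinuousOn E (Ici 0) := by
    simp only [hEdef]
    exact (((contp'C.mul contdωC.continuousOn).add
        (contpC.mul contddωC.continuousOn)).mul contθ).add
      (((continuousOn_const.mul contpC).mul contdωC.continuousOn).mul contθD)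
  have hE_aesm : AEStronglyMeasurable E mu :=
    (hE_cont.mono Ioi_subset_Ici_self).aestronglyMeasurable measurableSet_Ioi
  have hdω0' : ∀ x, R < x → dω x = 0 := fun x hx =>
    deriv_eq_zero_of_gt (fun y hy => hωR y hy.le) hx
  have hddω0' : ∀ x, R < x → ddω x = 0 := fun x hx =>
    deriv_eq_zero_of_gt (d := 0) (fun y hy => hdω0' y hy) hx
  have hE0 : ∀ x, R < x → E x = 0 := by
    intro x hx
    simp [hEdef, hdω0' x hx, hddω0' x hx]
  set B : ℝ := max R 1 with hBdef
  have hB0 : (0:ℝ) < B := lt_of_lt_of_le zero_lt_one (le_max_right _ _)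
  obtain ⟨CE, hCE⟩ := isCompact_Icc.exists_bound_of_continuousOn
    (s := Icc (0:ℝ) B) (hE_cont.mono Icc_subset_Ici_self)
  have hEmem : MemLp E 2 mu := by
    refine MemLp.of_le (memLp_indicator_const 2 (measurableSet_Ioc : MeasurableSet (Ioc (0:ℝ) B)) (max CE 0) (Or.inr ?_))
      hE_aesm ?_
    · show (volume.restrict (Ioi 0)) (Ioc (0:ℝ) B) ≠ ⊤
      rw [Measure.restrict_apply measurableSet_Ioc]
      exact (lt_of_le_of_lt (measure_mono inter_subset_left) measure_Ioc_lt_top).ne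
    · filter_upwards [mu_ae_mem] with x hx
      rcases le_or_gt x B with hxB | hxB
      · have hmem : x ∈ Ioc (0:ℝ) B := ⟨hx, hxB⟩
        rw [indicator_of_mem hmem]
        rw [Real.norm_of_nonneg (le_max_right CE 0)]
        exact le_trans (hCE x ⟨le_of_lt hx, hxB⟩) (le_max_left _ _)
      · rw [indicator_of_notMem (fun hmem => absurd hmem.2 (not_le.mpr hxB))]
        rw [hE0 x (lt_of_le_of_lt (le_max_left R 1) hxB)]
        simp
  set w : ℝ → ℂ := fun x => (z * u x + h x) + c * E x with hwdef
  have hwmem : MemLp w 2 mu := ((humem.const_mul z).add hh).add (hEmem.const_mul c)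
  -- approximating sequence
  have happrox : ∀ j : ℕ, ∃ gg : ℝ → ℂ, Continuous gg ∧ HasCompactSupport gg ∧
      MemLp gg 2 mu ∧ eLpNorm (fun x => h x - gg x) 2 mu ≤ ((j:ℝ≥0∞))⁻¹ := by
    intro j
    have hh' : MemLp ((Ioi (0:ℝ)).indicator h) 2 volume :=
      (memLp_indicator_iff_restrict measurableSet_Ioi).mpr hh
    obtain ⟨gg, hgsupp, hgsub, hgcont, hgmem⟩ := hh'.exists_hasCompactSupport_eLpNorm_sub_le
      (by norm_num : (2:ℝ≥0∞) ≠ ⊤) (ENNReal.inv_ne_zero.mpr (ENNReal.natCast_ne_top j))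
    refine ⟨gg, hgcont, hgsupp, hgmem.restrict _, ?_⟩
    have h1 : (fun x => h x - gg x) =ᵐ[mu] ((Ioi (0:ℝ)).indicator h - gg) := by
      filter_upwards [mu_ae_mem] with x hx
      show h x - gg x = (Ioi (0:ℝ)).indicator h x - gg x
      rw [indicator_of_mem hx]
    rw [eLpNorm_congr_ae h1]
    exact le_trans (eLpNorm_mono_measure _ Measure.restrict_le_self) hgsub
  choose g hgc hgs hgm hge using happrox
  have hgN : ∀ j : ℕ, ∃ Nj : ℝ, 0 ≤ Nj ∧ ∀ x, Nj ≤ |x| → g j x = 0 := by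
    intro j
    obtain ⟨Nb, hNb⟩ := (hgs j).isBounded.subset_closedBall 0
    refine ⟨max Nb 0 + 1, by positivity, fun x hx => ?_⟩
    by_contra hfx
    have hmem : x ∈ tsupport (g j) := subset_tsupport _ (by simpa using hfx)
    have h2 := hNb hmem
    simp only [Metric.mem_closedBall, Real.dist_eq, sub_zero] at h2
    have : |x| ≤ max Nb 0 := le_trans h2 (le_max_left _ _)
    linarith
  choose N hN0 hNz using hgN
  -- approximants
  set Fg : ℕ → ℝ → ℂ := fun j x => ∫ y in (0:ℝ)..x, φc y * g j y with hFgdef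
  set Pg : ℕ → ℝ → ℂ := fun j x => ∫ y in (0:ℝ)..x, θc y * g j y with hPgdef
  set Cg : ℕ → ℂ := fun j => ∫ y in Ioi (0:ℝ), θ z y * g j y with hCgdef
  set cg : ℕ → ℂ := fun j => ∫ y in Ioi (0:ℝ), g j y * φ z y with hcgdef
  set UU : ℕ → ℝ → ℂ := fun j x => θ z x * Fg j x + φ z x * (Cg j - Pg j x)
    - cg j * ((ω x : ℂ) * θ z x) with hUUdef
  set UU' : ℕ → ℝ → ℂ := fun j x => θD z x * Fg j x + φD z x * (Cg j - Pg j x)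
    - cg j * ((dω x : ℂ) * θ z x + (ω x : ℂ) * θD z x) with hUU'def
  set UU'' : ℕ → ℝ → ℂ := fun j x =>
    (DD p p' q z (θ z) (θD z) x * Fg j x + θD z x * (φc x * g j x))
    + (DD p p' q z (φ z) (φD z) x * (Cg j - Pg j x) - φD z x * (θc x * g j x))
    - cg j * ((ddω x : ℂ) * θ z x + 2 * (dω x : ℂ) * θD z x
        + (ω x : ℂ) * DD p p' q z (θ z) (θD z) x) with hUU''def
  have hFg_deriv : ∀ j x, HasDerivWithinAt (Fg j) (φc x * g j x) (Ici 0) x := fun j x =>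
    (((contφc.mul (hgc j)).integral_hasStrictDerivAt 0 x).hasDerivAt).hasDerivWithinAt
  have hPg_deriv : ∀ j x, HasDerivWithinAt (Pg j) (θc x * g j x) (Ici 0) x := fun j x =>
    (((contθc.mul (hgc j)).integral_hasStrictDerivAt 0 x).hasDerivAt).hasDerivWithinAt
  have hFg_cont : ∀ j, Continuous (Fg j) := fun j =>
    intervalIntegral.continuous_primitive
      (fun a b => (contφc.mul (hgc j)).intervalIntegrable a b) 0
  have hPg_cont : ∀ j, Continuous (Pg j) := fun j =>
    intervalIntegral.continuous_primitive
      (fun a b => (contθc.mul (hgc j)).intervalIntegrable a b) 0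
  have hωcastd : ∀ x, HasDerivWithinAt (fun y => ((ω y : ℝ) : ℂ)) ((dω x : ℂ)) (Ici 0) x :=
    fun x => ofReal_hasDerivWithinAt ((hωc.hasDeriv x).hasDerivWithinAt)
  have hdωcastd : ∀ x, HasDerivWithinAt (fun y => ((dω y : ℝ) : ℂ)) ((ddω x : ℂ)) (Ici 0) x :=
    fun x => ofReal_hasDerivWithinAt ((hωc.hasDeriv2 x).hasDerivWithinAt)
  -- derivative of UU
  have hUd : ∀ j, ∀ x ∈ Ici (0:ℝ), HasDerivWithinAt (UU j) (UU' j x) (Ici 0) x := by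
    intro j x hx
    have hx0 : (0:ℝ) ≤ x := hx
    have h3 := (((hθd x hx).mul (hFg_deriv j x)).add
        ((hφd x hx).mul ((hPg_deriv j x).const_sub (Cg j)))).sub
      (((hωcastd x).mul (hθd x hx)).const_mul (cg j))
    have heq : θD z x * Fg j x + θ z x * (φc x * g j x)
        + (φD z x * (Cg j - Pg j x) + φ z x * -(θc x * g j x))
        - cg j * ((dω x : ℂ) * θ z x + (ω x : ℂ) * θD z x) = UU' j x := by
      rw [hφc_eq x hx0, hθc_eq x hx0, hUU'def]
      ring
    exact heq ▸ h3
  have hU'd : ∀ j, ∀ x ∈ Ici (0:ℝ), HasDerivWithinAt (UU' j) (UU'' j x) (Ici 0) x := by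
    intro j x hx
    have hx0 : (0:ℝ) ≤ x := hx
    have h3 := (((hθDD x hx).mul (hFg_deriv j x)).add
        ((hφDD x hx).mul ((hPg_deriv j x).const_sub (Cg j)))).sub
      ((((hdωcastd x).mul (hθd x hx)).add ((hωcastd x).mul (hθDD x hx))).const_mul (cg j))
    have heq : DD p p' q z (θ z) (θD z) x * Fg j x + θD z x * (φc x * g j x)
        + (DD p p' q z (φ z) (φD z) x * (Cg j - Pg j x) + φD z x * -(θc x * g j x))
        - cg j * ((ddω x : ℂ) * θ z x + (dω x : ℂ) * θD z x
          + ((dω x : ℂ) * θD z x + (ω x : ℂ) * DD p p' q z (θ z) (θD z) x)) = UU'' j x := by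
      simp only [hUU''def]
      ring
    exact heq ▸ h3
  have hU''cont : ∀ j, ContinuousOn (UU'' j) (Ici 0) := by
    intro j
    simp only [hUU''def]
    refine ContinuousOn.sub (ContinuousOn.add (ContinuousOn.add ?_ ?_) (ContinuousOn.sub ?_ ?_))
      (continuousOn_const.mul (ContinuousOn.add (ContinuousOn.add ?_ ?_) ?_))
    · exact contDDθ.mul (hFg_cont j).continuousOn
    · exact contθD.mul (contφc.mul (hgc j)).continuousOn
    · exact contDDφ.mul (continuousOn_const.sub (hPg_cont j).continuousOn)
    · exact contφD.mul (contθc.mul (hgc j)).continuousOn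
    · exact contddωC.continuousOn.mul contθ
    · exact (continuousOn_const.mul contdωC.continuousOn).mul contθD
    · exact contωC.continuousOn.mul contDDθ
  -- compact support
  have hUsupp : ∀ j, ∀ x ≥ max B (N j), UU j x = 0 := by
    intro j x hx
    have hBx : B ≤ x := le_trans (le_max_left _ _) hx
    have hx0 : (0:ℝ) ≤ x := le_trans (le_of_lt hB0) hBx
    have hRx : R ≤ x := le_trans (le_max_left R 1) hBx
    have hNx : N j ≤ x := le_trans (le_max_right _ _) hx
    have hgz : ∀ y, y ∈ Ioi x → g j y = 0 := fun y hy => by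
      refine hNz j y ?_
      rw [abs_of_nonneg (le_trans hx0 (le_of_lt hy))]
      exact le_trans hNx (le_of_lt hy)
    have hiφg : Integrable (fun y => g j y * φ z y) mu := holder_integrable (hgm j) mφ
    have hiθg : Integrable (fun y => θ z y * g j y) mu := holder_integrable mθ (hgm j)
    have hFgx : Fg j x = cg j := by
      simp only [hcgdef]
      rw [integral_Ioi_split hiφg hx0]
      have htail : ∫ y in Ioi x, g j y * φ z y = 0 := by
        rw [setIntegral_congr_fun measurableSet_Ioi
          (fun y hy => by rw [hgz y hy, zero_mul] : EqOn _ (fun _ => (0:ℂ)) (Ioi x))]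
        simp
      have hFeq : ∫ y in (0:ℝ)..x, g j y * φ z y = Fg j x := by
        simp only [hFgdef]
        rw [intervalIntegral.integral_of_le hx0, intervalIntegral.integral_of_le hx0]
        exact setIntegral_congr_fun measurableSet_Ioc fun y hy => by
          rw [hφc_eq y (le_of_lt hy.1)]; ring
      rw [htail, hFeq, add_zero]
    have hPgx : Pg j x = Cg j := by
      simp only [hCgdef]
      rw [integral_Ioi_split hiθg hx0]
      have htail : ∫ y in Ioi x, θ z y * g j y = 0 := by
        rw [setIntegral_congr_fun measurableSet_Ioi
          (fun y hy => by rw [hgz y hy, mul_zero] : EqOn _ (fun _ => (0:ℂ)) (Ioi x))]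
        simp
      have hPeq : ∫ y in (0:ℝ)..x, θ z y * g j y = Pg j x := by
        simp only [hPgdef]
        rw [intervalIntegral.integral_of_le hx0, intervalIntegral.integral_of_le hx0]
        exact setIntegral_congr_fun measurableSet_Ioc fun y hy => by
          rw [hθc_eq y (le_of_lt hy.1)]
      rw [htail, hPeq, add_zero]
    simp only [hUUdef]
    simp only [hFgx, hPgx, hωR x hRx, sub_self, mul_zero, add_zero, Complex.ofReal_one, one_mul]
    ring
  -- boundary condition
  have hbc : ∀ j, UU' j 0 = (α:ℂ) * UU j 0 := by
    intro j
    have hF0 : Fg j 0 = 0 := intervalIntegral.integral_same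
    have hP0 : Pg j 0 = 0 := intervalIntegral.integral_same
    have hωz : ω 0 = 0 := hω0 0 hε
    have hdωz : dω 0 = 0 := deriv_eq_zero_of_lt hω0 hε
    simp only [hUUdef]; simp only [hUU'def]
    simp only [hF0, hP0, hωz, hdωz, hS.θ_init z, hS.φ_init z, hS.φ_init' z,
      Complex.ofReal_zero, mul_zero, zero_mul, add_zero, zero_add, sub_zero, one_mul]
  -- opA identity
  have hopA : ∀ j, ∀ x ∈ Ici (0:ℝ),
      opA p p' q (UU' j) (UU'' j) (UU j) x = z * UU j x + g j x + cg j * E x := by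
    intro j x hx
    have hx0 : (0:ℝ) ≤ x := hx
    have h1 := hθode' x hx
    have h2 := hφode' x hx
    have h3 := hwr x hx
    simp only [opA, hUUdef, hUU'def, hUU''def, hEdef, hφc_eq x hx0, hθc_eq x hx0]
    linear_combination (cg j * (ω x : ℂ) - Fg j x) * h1 - (Cg j - Pg j x) * h2 - g j x * h3
  -- L² estimates
  have hkmem : ∀ j, MemLp (fun y => g j y - h y) 2 mu := fun j => (hgm j).sub hh
  have hknorm : ∀ j, eLpNorm (fun y => g j y - h y) 2 mu ≤ ((j:ℝ≥0∞))⁻¹ := by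
    intro j
    have hne : (fun y => g j y - h y) = -(fun y => h y - g j y) := by
      funext y; simp only [Pi.neg_apply]; ring
    rw [hne, eLpNorm_neg]
    exact hge j
  have hcg_bd : ∀ j, ‖cg j - c‖ ≤ ∫ y in Ioi (0:ℝ), ‖φ z y * (g j y - h y)‖ := by
    intro j
    have him : Integrable (fun y => g j y * φ z y) mu := holder_integrable (hgm j) mφ
    have hc2 : Integrable (fun y => h y * φ z y) mu := holder_integrable hh mφ
    have hsub : cg j - c = ∫ y in Ioi (0:ℝ), (g j y * φ z y - h y * φ z y) := by
      simp only [hcgdef]; rw [hcdef]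
      exact (integral_sub him hc2).symm
    rw [hsub]
    refine (norm_integral_le_integral_norm _).trans (le_of_eq ?_)
    exact setIntegral_congr_fun measurableSet_Ioi fun y _ => by
      rw [← sub_mul, norm_mul, norm_mul, mul_comm]
  have hUdiff : ∀ j, eLpNorm (fun x => UU j x - u x) 2 mu ≤ K * ((j:ℝ≥0∞))⁻¹ := by
    intro j
    have hveq : ∀ x ∈ Ioi (0:ℝ), UU j x - u x
        = θ z x * (∫ y in (0:ℝ)..x, φ z y * (g j y - h y))
        + φ z x * (∫ y in Ioi x, θ z y * (g j y - h y))
        - (cg j - c) * ((ω x : ℂ) * θ z x) := by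
      intro x hx
      have hx0 : (0:ℝ) ≤ x := le_of_lt hx
      have hiθg : Integrable (fun y => θ z y * g j y) mu := holder_integrable mθ (hgm j)
      have e1 : Fg j x = ∫ y in (0:ℝ)..x, φ z y * g j y := by
        simp only [hFgdef]; rw [intervalIntegral.integral_of_le hx0, intervalIntegral.integral_of_le hx0]
        exact setIntegral_congr_fun measurableSet_Ioc fun y hy => by
          rw [hφc_eq y (le_of_lt hy.1)]
      have e2 : Pg j x = ∫ y in (0:ℝ)..x, θ z y * g j y := by
        simp only [hPgdef]; rw [intervalIntegral.integral_of_le hx0, intervalIntegral.integral_of_le hx0]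
        exact setIntegral_congr_fun measurableSet_Ioc fun y hy => by
          rw [hθc_eq y (le_of_lt hy.1)]
      have e3 : Cg j - Pg j x = ∫ y in Ioi x, θ z y * g j y := by
        simp only [hCgdef]; rw [integral_Ioi_split hiθg hx0, e2]
        ring
      have i1 : IntervalIntegrable (fun y => φ z y * g j y) volume 0 x := by
        rw [intervalIntegrable_iff_integrableOn_Ioc_of_le hx0]
        exact (integrableOn_of_mu (holder_integrable mφ (hgm j))).mono_set Ioc_subset_Ioi_self
      have i2 : IntervalIntegrable (fun y => φ z y * h y) volume 0 x := by
        rw [intervalIntegrable_iff_integrableOn_Ioc_of_le hx0]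
        exact (integrableOn_of_mu hiφh).mono_set Ioc_subset_Ioi_self
      have s1 : ∫ y in (0:ℝ)..x, φ z y * (g j y - h y)
          = (∫ y in (0:ℝ)..x, φ z y * g j y) - ∫ y in (0:ℝ)..x, φ z y * h y := by
        rw [← intervalIntegral.integral_sub i1 i2]
        exact intervalIntegral.integral_congr fun y _ => by ring
      have s2 : ∫ y in Ioi x, θ z y * (g j y - h y)
          = (∫ y in Ioi x, θ z y * g j y) - ∫ y in Ioi x, θ z y * h y := by
        rw [← integral_sub ((integrableOn_of_mu hiθg).mono_set (Ioi_subset_Ioi hx0))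
          ((integrableOn_of_mu hiθh).mono_set (Ioi_subset_Ioi hx0))]
        exact setIntegral_congr_fun measurableSet_Ioi fun y _ => by ring
      simp only [hUUdef]
      simp only [e1, e3]
      rw [hu_eq x hx, s1, s2]
      ring
    refine le_trans (quasi_bound mφ mθ hM0 hωbd (hkmem j) (hcg_bd j) hveq) ?_
    rw [hKdef]
    exact mul_le_mul_right (hknorm j) _
  have hUU_aesm : ∀ j, AEStronglyMeasurable (UU j) mu := by
    intro j
    simp only [hUUdef]
    exact ((mθ.1.mul (hFg_cont j).aestronglyMeasurable).add
      (mφ.1.mul (aestronglyMeasurable_const.sub (hPg_cont j).aestronglyMeasurable))).sub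
      (aestronglyMeasurable_const.mul (contωC.aestronglyMeasurable.mul mθ.1))
  set K2 : ℝ≥0∞ := (‖z‖₊ : ℝ≥0∞) * K + 1 + eLpNorm (φ z) 2 mu * eLpNorm E 2 mu with hK2def
  have hK2_ne_top : K2 ≠ ⊤ := by
    rw [hK2def]
    refine (ENNReal.add_lt_top.mpr ⟨ENNReal.add_lt_top.mpr ⟨?_, ENNReal.one_lt_top⟩, ?_⟩).ne
    · exact ENNReal.mul_lt_top ENNReal.coe_lt_top (lt_of_le_of_ne le_top hK_ne_top)
    · exact ENNReal.mul_lt_top mφ.2 hEmem.2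
  have hop_diff : ∀ j, eLpNorm
      (fun x => opA p p' q (UU' j) (UU'' j) (UU j) x - w x) 2 mu ≤ K2 * ((j:ℝ≥0∞))⁻¹ := by
    intro j
    have hcongr : (fun x => opA p p' q (UU' j) (UU'' j) (UU j) x - w x) =ᵐ[mu]
        (fun x => z * (UU j x - u x) + ((g j x - h x) + (cg j - c) * E x)) := by
      filter_upwards [mu_ae_mem] with x hx
      rw [hopA j x (le_of_lt hx : (0:ℝ) ≤ x)]; simp only [hwdef]
      ring
    rw [eLpNorm_congr_ae hcongr]
    have m1 : AEStronglyMeasurable (fun x => z * (UU j x - u x)) mu :=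
      (((hUU_aesm j).sub hu_aesm).const_mul z).congr (by rfl)
    have m2 : AEStronglyMeasurable (fun x => g j x - h x) mu := (hkmem j).1
    have m3 : AEStronglyMeasurable (fun x => (cg j - c) * E x) mu := hE_aesm.const_mul _
    refine le_trans (eLpNorm_add_le m1 (m2.add m3) one_le_two) ?_
    refine le_trans (add_le_add_right (eLpNorm_add_le m2 m3 one_le_two) _) ?_
    have b1 : eLpNorm (fun x => z * (UU j x - u x)) 2 mu
        ≤ (‖z‖₊ : ℝ≥0∞) * (K * ((j:ℝ≥0∞))⁻¹) := by
      refine le_trans (eLpNorm_const_smul_le (c := z)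
        (f := fun x => UU j x - u x) (p := 2) (μ := mu)) ?_
      rw [enorm_eq_nnnorm]
      exact mul_le_mul_right (hUdiff j) _
    have b3 : eLpNorm (fun x => (cg j - c) * E x) 2 mu
        ≤ eLpNorm (φ z) 2 mu * ((j:ℝ≥0∞))⁻¹ * eLpNorm E 2 mu := by
      refine le_trans (eLpNorm_const_smul_le (c := cg j - c)
        (f := E) (p := 2) (μ := mu)) ?_
      refine mul_le_mul_left ?_ _
      rw [← ofReal_norm]
      refine le_trans (ENNReal.ofReal_le_ofReal (hcg_bd j)) ?_
      refine le_trans (holder_ofReal mφ (hkmem j)) ?_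
      exact mul_le_mul_right (hknorm j) _
    refine le_trans (add_le_add b1 (add_le_add (hknorm j) b3)) (le_of_eq ?_)
    rw [hK2def]
    have hjj : ((j:ℝ≥0∞))⁻¹ = 1 * ((j:ℝ≥0∞))⁻¹ := (one_mul _).symm
    ring
  have hlim1 : Tendsto (fun j => eLpNorm (fun x => UU j x - u x) 2 mu) atTop (nhds 0) := by
    have hKj : Tendsto (fun j : ℕ => K * ((j:ℝ≥0∞))⁻¹) atTop (nhds 0) := by
      simpa using ENNReal.Tendsto.const_mul ENNReal.tendsto_inv_nat_nhds_zero (Or.inr hK_ne_top)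
    exact tendsto_of_tendsto_of_tendsto_of_le_of_le tendsto_const_nhds hKj
      (fun j => zero_le) hUdiff
  have hlim2 : Tendsto (fun j => eLpNorm
      (fun x => opA p p' q (UU' j) (UU'' j) (UU j) x - w x) 2 mu) atTop (nhds 0) := by
    have hKj : Tendsto (fun j : ℕ => K2 * ((j:ℝ≥0∞))⁻¹) atTop (nhds 0) := by
      simpa using ENNReal.Tendsto.const_mul ENNReal.tendsto_inv_nat_nhds_zero (Or.inr hK2_ne_top)
    exact tendsto_of_tendsto_of_tendsto_of_le_of_le tendsto_const_nhds hKj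
      (fun j => zero_le) hop_diff
  refine ⟨humem, UU, UU', UU'', w, hwmem, ?_, hlim1, hlim2⟩
  intro j
  exact ⟨hUd j, hU'd j, hU''cont j, ⟨max B (N j), hUsupp j⟩, hbc j⟩

end SLLC
end
end

section
/- (Lemma 3.5, second identity, eq. (3.8)) Assume the LC condition. For every z ∈ ℂ and every x ≥ 0: θ_z(x) − z·(𝓡(0)θ_z)(x) = −z·(∫₀^∞ θ_z(y)θ₀(y)dy)·φ₀(x) + θ₀(x). -/
open MeasureTheory Set Filter

noncomputable section

namespace SLLC

/-- Wronskian-type identity for two solutions of the Sturm–Liouville equation. -/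
lemma wron_aux (p q : ℝ → ℝ) (u uD v vD : ℝ → ℂ) (zu zv : ℂ)
    (hu : ∀ x ∈ Ici (0:ℝ), HasDerivWithinAt u (uD x) (Ici 0) x)
    (hpu : ∀ x ∈ Ici (0:ℝ), HasDerivWithinAt (fun y => (p y:ℂ) * uD y)
      (((q x:ℂ) - zu) * u x) (Ici 0) x)
    (hv : ∀ x ∈ Ici (0:ℝ), HasDerivWithinAt v (vD x) (Ici 0) x)
    (hpv : ∀ x ∈ Ici (0:ℝ), HasDerivWithinAt (fun y => (p y:ℂ) * vD y)
      (((q x:ℂ) - zv) * v x) (Ici 0) x)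
    (x : ℝ) (hx : 0 ≤ x) :
    u x * ((p x:ℂ) * vD x) - v x * ((p x:ℂ) * uD x)
      = (u 0 * ((p 0:ℂ) * vD 0) - v 0 * ((p 0:ℂ) * uD 0))
        + (zu - zv) * ∫ y in (0:ℝ)..x, u y * v y := by
  set F : ℝ → ℂ := fun y => u y * ((p y:ℂ) * vD y) - v y * ((p y:ℂ) * uD y) with hFdef
  have hF : ∀ t ∈ Ici (0:ℝ), HasDerivWithinAt F ((zu - zv) * (u t * v t)) (Ici 0) t := by
    intro t ht
    have h1 := ((hu t ht).mul (hpv t ht)).sub ((hv t ht).mul (hpu t ht))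
    have h2 : uD t * ((p t:ℂ) * vD t) + u t * (((q t:ℂ) - zv) * v t)
        - (vD t * ((p t:ℂ) * uD t) + v t * (((q t:ℂ) - zu) * u t))
        = (zu - zv) * (u t * v t) := by ring
    exact h2 ▸ h1
  have hucont : ContinuousOn u (Ici 0) := fun t ht => (hu t ht).continuousWithinAt
  have hvcont : ContinuousOn v (Ici 0) := fun t ht => (hv t ht).continuousWithinAt
  have hFcont : ContinuousOn F (Ici 0) := fun t ht => (hF t ht).continuousWithinAt
  have hint : IntervalIntegrable (fun y => (zu - zv) * (u y * v y)) volume 0 x := by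
    apply ContinuousOn.intervalIntegrable
    rw [uIcc_of_le hx]
    exact continuousOn_const.mul ((hucont.mono Icc_subset_Ici_self).mul
      (hvcont.mono Icc_subset_Ici_self))
  have hftc := intervalIntegral.integral_eq_sub_of_hasDeriv_right_of_le hx
    (hFcont.mono Icc_subset_Ici_self)
    (fun t ht => ((hF t (le_of_lt ht.1)).hasDerivAt (Ici_mem_nhds ht.1)).hasDerivWithinAt)
    hint
  rw [intervalIntegral.integral_const_mul] at hftc
  have hFx : F x = u x * ((p x:ℂ) * vD x) - v x * ((p x:ℂ) * uD x) := rfl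
  have hF0 : F 0 = u 0 * ((p 0:ℂ) * vD 0) - v 0 * ((p 0:ℂ) * uD 0) := rfl
  rw [← hFx, ← hF0]
  linear_combination -hftc

/-- Lemma 3.5, eq. (3.8). Assume the LC condition. For every `z ∈ ℂ` and
`x ≥ 0`: `θ_z(x) − z·(𝓡(0)θ_z)(x) = −z·(∫₀^∞ θ_z θ₀)·φ₀(x) + θ₀(x)`. -/
theorem stmt_11 (p p' q : ℝ → ℝ) (α : ℝ) (φ φD θ θD : ℂ → ℝ → ℂ)
    (hS : Setting p p' q α φ φD θ θD)
    (z : ℂ) (x : ℝ) (hx : 0 ≤ x) :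
    θ z x - z * quasiRes φ θ 0 (θ z) x
      = -z * (∫ y in Ioi (0 : ℝ), θ z y * θ 0 y) * φ 0 x + θ 0 x := by
  have hp0 : (p 0 : ℂ) ≠ 0 := by
    exact_mod_cast ne_of_gt (hS.p_pos 0 self_mem_Ici)
  -- Wronskian identities
  have hA := wron_aux p q (φ 0) (φD 0) (θ z) (θD z) 0 z
    (hS.φ_deriv 0) (hS.φ_ode 0) (hS.θ_deriv z) (hS.θ_ode z) x hx
  have hB := wron_aux p q (θ 0) (θD 0) (θ z) (θD z) 0 z
    (hS.θ_deriv 0) (hS.θ_ode 0) (hS.θ_deriv z) (hS.θ_ode z) x hx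
  have hW := wron_aux p q (φ 0) (φD 0) (θ 0) (θD 0) 0 0
    (hS.φ_deriv 0) (hS.φ_ode 0) (hS.θ_deriv 0) (hS.θ_ode 0) x hx
  simp only [hS.φ_init, hS.θ_init, hS.θ_init'] at hA hB hW
  have hpinv : (p 0 : ℂ) * -((p 0 : ℂ))⁻¹ = -1 := by
    field_simp
  rw [hpinv] at hA hB hW
  simp only [zero_sub, zero_mul, mul_zero, one_mul, sub_zero, zero_add, mul_one,
    sub_self, neg_zero] at hA hB hW
  -- variation of constants: θ z x = θ 0 x + z θ0 ∫ φ0 θz - z φ0 ∫ θ0 θz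
  have hvar : θ z x = θ 0 x + z * θ 0 x * (∫ y in (0:ℝ)..x, φ 0 y * θ z y)
      - z * φ 0 x * (∫ y in (0:ℝ)..x, θ 0 y * θ z y) := by
    linear_combination (φ 0 x) * hB - (θ 0 x) * hA + (θ z x) * hW
  -- integrability of θ0 · θz on (0,∞)
  have hmul : Integrable (fun y => θ 0 y * θ z y) mu := by
    have h12 : (1:ENNReal) / 1 = 1 / 2 + 1 / 2 := by
      rw [ENNReal.div_add_div_same, div_one, one_add_one_eq_two,
        ENNReal.div_self two_ne_zero ENNReal.ofNat_ne_top]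
    have := (hS.lc_θ z).smul (φ := θ 0) (hS.lc_θ 0) (r := 1) (hpqr := ⟨by rw [ENNReal.inv_two_add_inv_two, inv_one]⟩)
    rw [memLp_one_iff_integrable] at this
    exact this
  have hmuInt : IntegrableOn (fun y => θ 0 y * θ z y) (Ioi 0) volume := hmul
  -- split the integral over (0,∞) into (0,x] and (x,∞)
  have hsplit : (∫ y in Ioi (0:ℝ), θ 0 y * θ z y)
      = (∫ y in (0:ℝ)..x, θ 0 y * θ z y) + ∫ y in Ioi x, θ 0 y * θ z y := by
    rw [intervalIntegral.integral_of_le hx]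
    rw [← setIntegral_union (Ioc_disjoint_Ioi le_rfl) measurableSet_Ioi
      (hmuInt.mono_set Ioc_subset_Ioi_self)
      (hmuInt.mono_set (Ioi_subset_Ioi hx))]
    rw [Ioc_union_Ioi_eq_Ioi hx]
  have hcomm : (∫ y in Ioi (0:ℝ), θ z y * θ 0 y) = ∫ y in Ioi (0:ℝ), θ 0 y * θ z y := by
    congr 1; ext y; ring
  simp only [quasiRes]
  rw [hcomm, hsplit]
  linear_combination hvar

end SLLC
end
end

section
/- (Green identity at infinity, eq. (3.20)) Assume the LC condition and let λ ∈ ℝ. Then the limit lim_{x→∞} p(x)·(φ_λ(x)·θ₀′(x) − φ_λ′(x)·θ₀(x)) exists and λ·∫₀^∞ φ_λ(y)·θ₀(y) dy = 1 + lim_{x→∞} p(x)·(φ_λ(x)·θ₀′(x) − φ_λ′(x)·θ₀(x)). -/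
open MeasureTheory Set Filter

noncomputable section

namespace SLLC

/-- Green identity at infinity, eq. (3.20). Assume the LC condition and
`λ ∈ ℝ`. Then `lim_{x→∞} p(x)·(φ_λ(x)θ₀'(x) − φ_λ'(x)θ₀(x))` exists and
`λ·∫₀^∞ φ_λ θ₀ = 1 + lim_{x→∞} p(x)·(φ_λ(x)θ₀'(x) − φ_λ'(x)θ₀(x))`. -/
theorem stmt_19 (p p' q : ℝ → ℝ) (α : ℝ) (φ φD θ θD : ℂ → ℝ → ℂ)
    (hS : Setting p p' q α φ φD θ θD) (lam : ℝ) :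
    ∃ L : ℂ,
      Tendsto (fun x : ℝ => (p x : ℂ) * (φ (lam : ℂ) x * θD 0 x - φD (lam : ℂ) x * θ 0 x))
        atTop (nhds L) ∧
      (lam : ℂ) * (∫ y in Ioi (0 : ℝ), φ (lam : ℂ) y * θ 0 y) = 1 + L := by
  have hp0 : (p 0 : ℂ) ≠ 0 := by
    exact_mod_cast (Complex.ofReal_ne_zero).mpr (hS.p_pos 0 (mem_Ici.mpr le_rfl)).ne'
  set f : ℝ → ℂ := fun y => φ (lam : ℂ) y * θ 0 y with hfdef
  -- integrability of f on (0,∞) by Cauchy-Schwarz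
  have hint : Integrable f mu := by
    have h : MemLp (φ (lam : ℂ) • θ 0) 1 mu :=
      (hS.lc_θ 0).smul (hS.lc_φ (lam : ℂ))
    exact memLp_one_iff_integrable.mp h
  set W : ℝ → ℂ := fun x =>
    (p x : ℂ) * (φ (lam : ℂ) x * θD 0 x - φD (lam : ℂ) x * θ 0 x) with hWdef
  -- derivative of the Wronskian-type expression
  have hW : ∀ x ∈ Ici (0 : ℝ), HasDerivWithinAt W ((lam : ℂ) * f x) (Ici 0) x := by
    intro x hx
    have h1 := (hS.φ_deriv (lam : ℂ) x hx).mul (hS.θ_ode 0 x hx)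
    have h2 := (hS.φ_ode (lam : ℂ) x hx).mul (hS.θ_deriv 0 x hx)
    have h := h1.sub h2
    have hWeq : W = fun y => φ (lam : ℂ) y * ((p y : ℂ) * θD 0 y)
        - ((p y : ℂ) * φD (lam : ℂ) y) * θ 0 y := by
      funext y; simp only [hWdef]; ring
    rw [hWeq]
    convert h using 1
    case e'_9 => simp only [hfdef]; ring
    all_goals rfl
  have hWcont : ContinuousOn W (Ici 0) := fun x hx => (hW x hx).continuousWithinAt
  have hfcont : ContinuousOn f (Ici 0) := fun x hx =>
    ((hS.φ_deriv (lam : ℂ) x hx).continuousWithinAt).mul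
      ((hS.θ_deriv 0 x hx).continuousWithinAt)
  have hW0 : W 0 = -1 := by
    simp only [hWdef, hS.φ_init, hS.φ_init', hS.θ_init, hS.θ_init']
    field_simp
    ring
  -- fundamental theorem of calculus on [0, b]
  have key : ∀ b : ℝ, 0 ≤ b → W b = -1 + (lam : ℂ) * ∫ y in (0 : ℝ)..b, f y := by
    intro b hb
    have hii : IntervalIntegrable (fun y => (lam : ℂ) * f y) volume 0 b := by
      apply ContinuousOn.intervalIntegrable
      rw [uIcc_of_le hb]
      exact continuousOn_const.mul (hfcont.mono Icc_subset_Ici_self)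
    have := intervalIntegral.integral_eq_sub_of_hasDeriv_right_of_le hb
      (hWcont.mono Icc_subset_Ici_self)
      (fun x hx => ((hW x (le_of_lt hx.1)).mono (fun y hy => le_trans hx.1.le hy.le)))
      hii
    rw [intervalIntegral.integral_const_mul, hW0] at this
    linear_combination -this
  refine ⟨(lam : ℂ) * (∫ y in Ioi (0 : ℝ), f y) - 1, ?_, by ring⟩
  have hlim : Tendsto (fun b : ℝ => -1 + (lam : ℂ) * ∫ y in (0 : ℝ)..b, f y) atTop
      (nhds (-1 + (lam : ℂ) * ∫ y in Ioi (0 : ℝ), f y)) := by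
    refine tendsto_const_nhds.add (Tendsto.const_mul _ ?_)
    exact MeasureTheory.intervalIntegral_tendsto_integral_Ioi 0 hint tendsto_id
  have heq : (fun b : ℝ => -1 + (lam : ℂ) * ∫ y in (0 : ℝ)..b, f y) =ᶠ[atTop] W := by
    filter_upwards [eventually_ge_atTop (0 : ℝ)] with b hb
    exact (key b hb).symm
  have : Tendsto W atTop (nhds (-1 + (lam : ℂ) * ∫ y in Ioi (0 : ℝ), f y)) :=
    hlim.congr' heq
  simpa [hWdef, hfdef, sub_eq_add_neg, add_comm] using this

end SLLC
end
end
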